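/- arXiv:2506.21383 — 10 statements merged into one kernel-verified Lean document; each statement's English description precedes it below -/
import Mathlib

section
/- Let p be a prime and t ≥ 1 an integer. Let u₁, c₁ ∈ [1, p-1] with u₁ ≥ c₁, and let v₁ ∈ [0, p^t - 2]. Then C(u₁·p^t + v₁, c₁·p^t - 1) + C(u₁·p^t + v₁ + 1, c₁·p^t) ≡ C(u₁, c₁) (mod p). -/
-- Iterated Lucas step: digits of `k = c * p^t` below position `t` are zero.
private lemma aux_choose_mul_pow (p : ℕ) [Fact p.Prime] :
    ∀ t u c w, w < p ^ t → (u * p ^ t + w).choose (c * p ^ t) ≡ u.choose c [MOD p] := by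
  intro t
  induction t with
  | zero =>
    intro u c w hw
    have hw0 : w = 0 := by simpa using hw
    subst hw0
    simpa using Nat.ModEq.refl (u.choose c)
  | succ t ih =>
    intro u c w hw
    have hp : 0 < p := (Fact.out : p.Prime).pos
    have step := Choose.choose_modEq_choose_mod_mul_choose_div_nat
      (p := p) (n := u * p ^ (t + 1) + w) (k := c * p ^ (t + 1))
    have hn : u * p ^ (t + 1) + w = w + (u * p ^ t) * p := by ring
    have hk : c * p ^ (t + 1) = 0 + (c * p ^ t) * p := by ring
    rw [hn, hk, Nat.add_mul_mod_self_right, Nat.add_mul_mod_self_right,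
      Nat.add_mul_div_right _ _ hp, Nat.add_mul_div_right _ _ hp] at step
    simp only [Nat.zero_mod, Nat.zero_div, Nat.choose_zero_right, one_mul, Nat.zero_add] at step
    have hwp : w / p < p ^ t := by
      rw [Nat.div_lt_iff_lt_mul hp]
      calc w < p ^ (t + 1) := hw
      _ = p ^ t * p := by ring
    have := ih u c (w / p) hwp
    rw [hn, hk, Nat.zero_add]
    calc (w + u * p ^ t * p).choose (c * p ^ t * p)
        ≡ (w / p + u * p ^ t).choose (c * p ^ t) [MOD p] := step
      _ = (u * p ^ t + w / p).choose (c * p ^ t) := by rw [Nat.add_comm]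
      _ ≡ u.choose c [MOD p] := this

-- Iterated Lucas: `k = c*p^(t+1) - 1` has `t+1` low digits equal to `p-1`,
-- while `w ≤ p^(t+1) - 2` has at least one low digit `< p-1`.
private lemma aux_choose_sub_one (p : ℕ) [Fact p.Prime] (u c : ℕ) (hc : 1 ≤ c) :
    ∀ t w, w ≤ p ^ (t + 1) - 2 → p ∣ (u * p ^ (t + 1) + w).choose (c * p ^ (t + 1) - 1) := by
  have hp2 : 2 ≤ p := (Fact.out : p.Prime).two_le
  have hp0 : 0 < p := by omega
  intro t
  induction t with
  | zero =>
    intro w hw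
    have hw' : w ≤ p - 2 := by simpa using hw
    have step := Choose.choose_modEq_choose_mod_mul_choose_div_nat
      (p := p) (n := u * p ^ 1 + w) (k := c * p ^ 1 - 1)
    have hk : c * p ^ 1 - 1 = (p - 1) + (c - 1) * p := by
      rw [pow_one, Nat.sub_one_mul]
      have hcp : p ≤ c * p := Nat.le_mul_of_pos_left p (by omega)
      omega
    have hn : u * p ^ 1 + w = w + u * p := by ring
    rw [hk, hn, Nat.add_mul_mod_self_right, Nat.add_mul_mod_self_right,
      Nat.add_mul_div_right _ _ hp0, Nat.add_mul_div_right _ _ hp0] at step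
    have hwlt : w % p < p - 1 := by
      have : w % p ≤ w := Nat.mod_le _ _
      omega
    have hmod : (p - 1) % p = p - 1 := Nat.mod_eq_of_lt (by omega)
    rw [hmod] at step
    have hzero : (w % p).choose (p - 1) = 0 := Nat.choose_eq_zero_of_lt hwlt
    rw [hzero, zero_mul] at step
    show p ∣ (u * p ^ 1 + w).choose (c * p ^ 1 - 1)
    rw [hk, hn]
    exact (Nat.modEq_zero_iff_dvd).mp step
  | succ t ih =>
    intro w hw
    have hw' : w ≤ p ^ (t + 2) - 2 := hw
    set m := c * p ^ (t + 1) with hm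
    have hm1 : 1 ≤ m := Nat.mul_pos (by omega) (pow_pos (by omega) _)
    have hk : c * p ^ (t + 2) - 1 = (p - 1) + (m - 1) * p := by
      have h1 : c * p ^ (t + 2) = m * p := by rw [hm]; ring
      have h2 : (m - 1) * p = m * p - p := by rw [Nat.sub_one_mul]
      have h3 : p ≤ m * p := Nat.le_mul_of_pos_left p hm1
      omega
    have step := Choose.choose_modEq_choose_mod_mul_choose_div_nat
      (p := p) (n := u * p ^ (t + 2) + w) (k := c * p ^ (t + 2) - 1)
    have hn : u * p ^ (t + 2) + w = w + (u * p ^ (t + 1)) * p := by ring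
    rw [hk, hn, Nat.add_mul_mod_self_right, Nat.add_mul_mod_self_right,
      Nat.add_mul_div_right _ _ hp0, Nat.add_mul_div_right _ _ hp0] at step
    have hmod : (p - 1) % p = p - 1 := Nat.mod_eq_of_lt (by omega)
    have hdiv : (p - 1) / p = 0 := Nat.div_eq_of_lt (by omega)
    rw [hmod, hdiv, Nat.zero_add] at step
    show p ∣ (u * p ^ (t + 2) + w).choose (c * p ^ (t + 2) - 1)
    rw [hk, hn]
    rcases lt_or_eq_of_le (show w % p ≤ p - 1 by
        have := Nat.mod_lt w hp0; omega) with hlt | heq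
    · have hzero : (w % p).choose (p - 1) = 0 := Nat.choose_eq_zero_of_lt hlt
      rw [hzero, zero_mul] at step
      exact (Nat.modEq_zero_iff_dvd).mp step
    · have hdecomp : p * (w / p) + w % p = w := Nat.div_add_mod w p
      have hppow : p ≤ p ^ (t + 1) := by
        calc p = p ^ 1 := (pow_one p).symm
        _ ≤ p ^ (t + 1) := Nat.pow_le_pow_right (by omega) (by omega)
      have hpow : p ^ (t + 2) = p * p ^ (t + 1) := by ring
      rw [hpow] at hw'
      have hwp : w / p ≤ p ^ (t + 1) - 2 := by
        by_contra hcon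
        push_neg at hcon
        have h1 : p ^ (t + 1) - 1 ≤ w / p := by omega
        have h2 : p * (p ^ (t + 1) - 1) ≤ p * (w / p) := Nat.mul_le_mul_left p h1
        have h3 : p * (p ^ (t + 1) - 1) = p * p ^ (t + 1) - p := by
          rw [Nat.mul_sub, mul_one]
        have hB : p + 2 ≤ p * p ^ (t + 1) := by
          have h4 : p * p ≤ p * p ^ (t + 1) := Nat.mul_le_mul_left p hppow
          nlinarith
        omega
      have hdvd : p ∣ (w / p + u * p ^ (t + 1)).choose (m - 1) := by
        rw [Nat.add_comm]
        exact ih (w / p) hwp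
      have : (w % p).choose (p - 1) * (w / p + u * p ^ (t + 1)).choose (m - 1) ≡ 0 [MOD p] :=
        (Nat.modEq_zero_iff_dvd).mpr (Dvd.dvd.mul_left hdvd _)
      exact (Nat.modEq_zero_iff_dvd).mp (step.trans this)

theorem stmt_1 (p : ℕ) (hp : p.Prime) (t : ℕ) (ht : 1 ≤ t)
    (u₁ c₁ : ℕ) (hu₁ : 1 ≤ u₁) (hu₁p : u₁ ≤ p - 1) (hc₁ : 1 ≤ c₁) (hc₁p : c₁ ≤ p - 1)
    (huc : c₁ ≤ u₁) (v₁ : ℕ) (hv₁ : v₁ ≤ p ^ t - 2) :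
    (u₁ * p ^ t + v₁).choose (c₁ * p ^ t - 1) + (u₁ * p ^ t + v₁ + 1).choose (c₁ * p ^ t)
      ≡ u₁.choose c₁ [MOD p] := by
  haveI : Fact p.Prime := ⟨hp⟩
  have hp2 : 2 ≤ p := hp.two_le
  obtain ⟨s, rfl⟩ : ∃ s, t = s + 1 := ⟨t - 1, by omega⟩
  have hpow : 2 ≤ p ^ (s + 1) := by
    calc 2 ≤ p := hp2
    _ = p ^ 1 := (pow_one p).symm
    _ ≤ p ^ (s + 1) := Nat.pow_le_pow_right (by omega) (by omega)
  have h1 : p ∣ (u₁ * p ^ (s + 1) + v₁).choose (c₁ * p ^ (s + 1) - 1) :=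
    aux_choose_sub_one p u₁ c₁ hc₁ s v₁ hv₁
  have hk1 : c₁ * p ^ (s + 1) = (c₁ * p ^ (s + 1) - 1) + 1 := by
    have : 0 < c₁ * p ^ (s + 1) := Nat.mul_pos (by omega) (pow_pos (by omega) _)
    omega
  have hpascal : (u₁ * p ^ (s + 1) + v₁ + 1).choose (c₁ * p ^ (s + 1)) =
      (u₁ * p ^ (s + 1) + v₁).choose (c₁ * p ^ (s + 1) - 1)
        + (u₁ * p ^ (s + 1) + v₁).choose (c₁ * p ^ (s + 1)) := by
    conv_lhs => rw [hk1]
    rw [Nat.choose_succ_succ, Nat.succ_eq_add_one, ← hk1]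
  have h2 : (u₁ * p ^ (s + 1) + v₁).choose (c₁ * p ^ (s + 1)) ≡ u₁.choose c₁ [MOD p] :=
    aux_choose_mul_pow p (s + 1) u₁ c₁ v₁ (by omega)
  rw [hpascal]
  have hz : (u₁ * p ^ (s + 1) + v₁).choose (c₁ * p ^ (s + 1) - 1) ≡ 0 [MOD p] :=
    (Nat.modEq_zero_iff_dvd).mpr h1
  calc (u₁ * p ^ (s + 1) + v₁).choose (c₁ * p ^ (s + 1) - 1)
        + ((u₁ * p ^ (s + 1) + v₁).choose (c₁ * p ^ (s + 1) - 1)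
          + (u₁ * p ^ (s + 1) + v₁).choose (c₁ * p ^ (s + 1)))
      ≡ 0 + (0 + u₁.choose c₁) [MOD p] := (hz.add (hz.add h2))
    _ = u₁.choose c₁ := by omega
end

section
/- Let p be a prime, G a finite abelian p-group, and S = g₁·…·g_ℓ a sequence over G with ℓ ≥ D(G), where D(G) is the Davenport constant. Then for every g ∈ G, the number of subsequences of S of even length with sum g is congruent modulo p to the number of subsequences of S of odd length with sum g. -/
open Pointwise

section Aux

open Multiset in
lemma aux_pigeon {ι : Type*} [Fintype ι] [DecidableEq ι] {R : Type*} [CommRing R]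
    (z : ι → R) (m : ι → ℕ) (hz : ∀ j, z j ^ m j = 0)
    (s : Multiset ι) (hs : 1 + ∑ j, (m j - 1) ≤ Multiset.card s) :
    (s.map z).prod = 0 := by
  have hex : ∃ j, m j ≤ s.count j := by
    by_contra h
    push_neg at h
    have h2 : ∀ j, s.count j ≤ m j - 1 := fun j => Nat.le_sub_one_of_lt (h j)
    have hle : Multiset.card s ≤ ∑ j, (m j - 1) := by
      calc Multiset.card s = ∑ j ∈ s.toFinset, s.count j := (Multiset.toFinset_sum_count_eq s).symm
        _ ≤ ∑ j, s.count j := Finset.sum_le_sum_of_subset (Finset.subset_univ _)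
        _ ≤ ∑ j, (m j - 1) := Finset.sum_le_sum (fun j _ => h2 j)
    omega
  obtain ⟨j, hj⟩ := hex
  have hsplit : s = Multiset.filter (· = j) s + Multiset.filter (¬ · = j) s :=
    (Multiset.filter_add_not _ s).symm
  rw [hsplit, Multiset.map_add, Multiset.prod_add]
  have hfe : Multiset.filter (· = j) s = Multiset.replicate (s.count j) j := by
    rw [Multiset.filter_eq']
  rw [hfe, Multiset.map_replicate, Multiset.prod_replicate]
  have hzc : z j ^ s.count j = 0 := by
    have h3 : z j ^ s.count j = z j ^ m j * z j ^ (s.count j - m j) := by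
      rw [← pow_add]; congr 1; omega
    rw [h3, hz j, zero_mul]
  rw [hzc, zero_mul]

lemma aux_span_pow {ι : Type*} {R : Type*} [CommRing R] (z : ι → R) (t : ℕ) :
    Ideal.span (Set.range z) ^ t ≤
      Ideal.span {r | ∃ s : Multiset ι, Multiset.card s = t ∧ (s.map z).prod = r} := by
  induction t with
  | zero =>
      intro x _
      have h1 : (1 : R) ∈ {r | ∃ s : Multiset ι, Multiset.card s = 0 ∧ (s.map z).prod = r} :=
        ⟨0, by simp⟩
      have h2 : Ideal.span {r | ∃ s : Multiset ι, Multiset.card s = 0 ∧ (s.map z).prod = r} = ⊤ := by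
        rw [Ideal.eq_top_iff_one]; exact Ideal.subset_span h1
      rw [h2]; trivial
  | succ t ih =>
      rw [pow_succ]
      calc Ideal.span (Set.range z) ^ t * Ideal.span (Set.range z)
          ≤ Ideal.span {r | ∃ s : Multiset ι, Multiset.card s = t ∧ (s.map z).prod = r} *
            Ideal.span (Set.range z) := Ideal.mul_mono_left ih
        _ = Ideal.span ({r | ∃ s : Multiset ι, Multiset.card s = t ∧ (s.map z).prod = r} *
            Set.range z) := (Ideal.span_mul_span' _ _)
        _ ≤ Ideal.span {r | ∃ s : Multiset ι, Multiset.card s = t + 1 ∧ (s.map z).prod = r} := by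
            apply Ideal.span_mono
            rintro x ⟨a, ⟨s, hs, rfl⟩, b, ⟨j, rfl⟩, rfl⟩
            exact ⟨j ::ₘ s, by simp [hs], by simp [mul_comm]⟩

lemma aux_prod_mem_pow {R : Type*} [CommRing R] (A : Ideal R) {α : Type*} (s : Finset α)
    (w : α → R) (h : ∀ i ∈ s, w i ∈ A) : (∏ i ∈ s, w i) ∈ A ^ s.card := by
  classical
  induction s using Finset.induction_on with
  | empty => simp [Ideal.one_eq_top]
  | @insert a s ha ih =>
      rw [Finset.prod_insert ha, Finset.card_insert_of_notMem ha, pow_succ, mul_comm (A ^ s.card)]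
      exact Ideal.mul_mem_mul (h a (Finset.mem_insert_self a s))
        (ih fun i hi => h i (Finset.mem_insert_of_mem hi))

lemma aux_le_map {α β : Type*} [DecidableEq α] [DecidableEq β] (f : α → β) :
    ∀ (s : Multiset β) (t : Multiset α), s ≤ t.map f → ∃ u ≤ t, s = u.map f := by
  intro s
  induction s using Multiset.induction_on with
  | empty => exact fun t _ => ⟨0, Multiset.zero_le t, rfl⟩
  | @cons b s ih =>
      intro t h
      have hb : b ∈ t.map f := Multiset.mem_of_le h (Multiset.mem_cons_self b s)
      obtain ⟨a, ha, rfl⟩ := Multiset.mem_map.mp hb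
      have h2 : s ≤ (t.map f).erase (f a) := by
        have h4 := Multiset.erase_le_erase (f a) h
        rwa [Multiset.erase_cons_head] at h4
      have h3 : (t.map f).erase (f a) = (t.erase a).map f := by
        conv_lhs => rw [← Multiset.cons_erase ha]
        rw [Multiset.map_cons, Multiset.erase_cons_head]
      rw [h3] at h2
      obtain ⟨u, hu, rfl⟩ := ih (t.erase a) h2
      exact ⟨a ::ₘ u, le_trans (Multiset.cons_le_cons a hu)
        (le_of_eq (Multiset.cons_erase ha)), by rw [Multiset.map_cons]⟩

open DirectSum in
lemma aux_zsf {ι : Type} [Fintype ι] [DecidableEq ι] (N : ι → ℕ) (hN : ∀ j, 1 ≤ N j)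
    {G : Type*} [AddCommGroup G] [DecidableEq G]
    (φ : G ≃+ ⨁ j, ZMod (N j)) (T : Multiset G)
    (hT : T ≤ (Finset.univ.val : Multiset (Σ j, Fin (N j - 1))).map
      (fun x => φ.symm (DirectSum.of (fun j => ZMod (N j)) x.1 1)))
    (hsum : T.sum = 0) : T = 0 := by
  classical
  set c : ι → G := fun j => φ.symm (DirectSum.of (fun j => ZMod (N j)) j 1) with hc
  obtain ⟨u, hu, rfl⟩ := aux_le_map (fun x : Σ j, Fin (N j - 1) => c x.1) _ _ hT
  have hnodup : u.Nodup := Multiset.nodup_of_le hu Finset.univ.nodup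
  set I : Finset (Σ j, Fin (N j - 1)) := ⟨u, hnodup⟩ with hI
  have hsum2 : ∑ x ∈ I, c x.1 = 0 := hsum
  have hphi : ∑ x ∈ I, DirectSum.of (fun j => ZMod (N j)) x.1 1 = 0 := by
    have h5 := congrArg φ hsum2
    rw [map_sum, map_zero] at h5
    simpa [c, AddEquiv.apply_symm_apply] using h5
  have hcomp : ∀ i : ι, ((I.filter (fun x => x.1 = i)).card : ZMod (N i)) = 0 := by
    intro i
    have h1 : (∑ x ∈ I, DirectSum.of (fun j => ZMod (N j)) x.1 1) i = 0 := by rw [hphi]; rfl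
    rw [DFinsupp.finset_sum_apply] at h1
    rw [← h1]
    rw [← Finset.sum_filter_add_sum_filter_not I (fun x => x.1 = i)]
    have hz : ∑ x ∈ I.filter (fun x => ¬ x.1 = i),
        (DirectSum.of (fun j => ZMod (N j)) x.1 1) i = 0 := by
      apply Finset.sum_eq_zero
      intro x hx
      exact DirectSum.of_eq_of_ne _ _ _ (Ne.symm (Finset.mem_filter.mp hx).2)
    have ho : ∑ x ∈ I.filter (fun x => x.1 = i),
        (DirectSum.of (fun j => ZMod (N j)) x.1 1) i
        = (I.filter (fun x => x.1 = i)).card • (1 : ZMod (N i)) := by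
      rw [Finset.sum_congr rfl (fun x hx => ?_), Finset.sum_const]
      obtain ⟨-, h⟩ := Finset.mem_filter.mp hx
      subst h
      exact DirectSum.of_eq_same _ _
    rw [hz, ho, add_zero, nsmul_eq_mul, mul_one]
  have hcard : ∀ i : ι, (I.filter (fun x => x.1 = i)).card = 0 := by
    intro i
    have hb : (I.filter (fun x => x.1 = i)).card ≤ N i - 1 := by
      calc (I.filter (fun x => x.1 = i)).card
          ≤ (Finset.univ.filter (fun x : Σ j, Fin (N j - 1) => x.1 = i)).card :=
            Finset.card_le_card (Finset.filter_subset_filter _ (Finset.subset_univ _))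
        _ = (({i} : Finset ι).sigma (fun _ => (Finset.univ : Finset (Fin (N _ - 1))))).card := by
            congr 1
            ext x
            simp [Finset.mem_sigma, eq_comm]
        _ = N i - 1 := by rw [Finset.card_sigma]; simp
    haveI : NeZero (N i) := ⟨by have := hN i; omega⟩
    have hdvd := (ZMod.natCast_eq_zero_iff _ _).mp (hcomp i)
    have hlt : (I.filter (fun x => x.1 = i)).card < N i := by have := hN i; omega
    exact Nat.eq_zero_of_dvd_of_lt hdvd hlt
  have hIc : I.card = 0 := by
    rw [Finset.card_eq_sum_card_fiberwise (f := Sigma.fst) (t := Finset.univ)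
      (fun x _ => Finset.mem_univ _)]
    exact Finset.sum_eq_zero fun i _ => hcard i
  have hIe : I = ∅ := Finset.card_eq_zero.mp hIc
  have hu0 : u = 0 := by simpa [hI] using congrArg Finset.val hIe
  rw [hu0, Multiset.map_zero]

end Aux

section YLemmas
variable (p : ℕ) [Fact p.Prime] (G : Type*) [AddCommGroup G] [DecidableEq G]

noncomputable abbrev RR := AddMonoidAlgebra (ZMod p) G

noncomputable def xe (g : G) : RR p G := AddMonoidAlgebra.single g 1

instance : CharP (RR p G) p := by
  apply charP_of_injective_ringHom (R := ZMod p) (f := AddMonoidAlgebra.singleZeroRingHom)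
  intro a b hab
  simpa using AddMonoidAlgebra.single_right_injective (m := (0 : G)) hab

variable {p G}

lemma xe_mul (a b : G) : xe p G a * xe p G b = xe p G (a + b) := by
  simp [xe, AddMonoidAlgebra.single_mul_single]

lemma xe_zero : xe p G 0 = 1 := rfl

lemma xe_pow (a : G) (n : ℕ) : xe p G a ^ n = xe p G (n • a) := by
  simp [xe, AddMonoidAlgebra.single_pow]

lemma y_add (a b : G) :
    1 - xe p G (a + b) = (1 - xe p G a) + (1 - xe p G b) - (1 - xe p G a) * (1 - xe p G b) := by
  rw [← xe_mul]; ring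

lemma y_nilpotent (a : G) (k : ℕ) (h : p ^ k • a = 0) : (1 - xe p G a) ^ p ^ k = 0 := by
  rw [sub_pow_char_pow, xe_pow, h, xe_zero, one_pow, sub_self]

lemma y_mem_span {ι : Type*} (c : ι → G) (g : G) (hg : g ∈ AddSubmonoid.closure (Set.range c)) :
    1 - xe p G g ∈ Ideal.span (Set.range fun j => 1 - xe p G (c j)) := by
  induction hg using AddSubmonoid.closure_induction with
  | mem x hx => obtain ⟨j, rfl⟩ := hx; exact Ideal.subset_span ⟨j, rfl⟩
  | zero => rw [xe_zero, sub_self]; exact Ideal.zero_mem _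
  | add a b _ _ ha hb =>
      rw [y_add]
      exact sub_mem (add_mem ha hb) (Ideal.mul_mem_right _ _ ha)

end YLemmas

theorem stmt_8 (p : ℕ) (hp : p.Prime) (G : Type*) [AddCommGroup G] [Fintype G] [DecidableEq G]
    (hpG : ∀ g : G, ∃ n : ℕ, p ^ n • g = 0)
    (D : ℕ)
    (hD : IsLeast {t : ℕ | ∀ S : Multiset G, t ≤ Multiset.card S →
      ∃ T ≤ S, T ≠ 0 ∧ T.sum = 0} D)
    (ℓ : ℕ) (hℓ : D ≤ ℓ) (f : Fin ℓ → G) (g : G) :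
    (Finset.univ.filter (fun I : Finset (Fin ℓ) =>
        (∑ i ∈ I, f i) = g ∧ Even I.card)).card ≡
    (Finset.univ.filter (fun I : Finset (Fin ℓ) =>
        (∑ i ∈ I, f i) = g ∧ Odd I.card)).card [MOD p] := by
  classical
  haveI := Fact.mk hp
  obtain ⟨ι, hι, q, hq, e, ⟨φ⟩⟩ := AddCommGroup.equiv_directSum_zmod_of_finite G
  set N : ι → ℕ := fun j => q j ^ e j with hNdef
  have hN1 : ∀ j, 1 ≤ N j := fun j => Nat.one_le_iff_ne_zero.mpr (pow_ne_zero _ (hq j).ne_zero)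
  haveI : ∀ j, NeZero (N j) := fun j => ⟨by have := hN1 j; omega⟩
  set c : ι → G := fun j => φ.symm (DirectSum.of (fun j => ZMod (N j)) j 1) with hc
  have hphic : ∀ j, φ (c j) = DirectSum.of (fun j => ZMod (N j)) j 1 :=
    fun j => φ.apply_symm_apply _
  -- N j • c j = 0
  have hNc : ∀ j, N j • c j = 0 := by
    intro j
    apply φ.injective
    rw [map_nsmul, hphic, map_zero, ← map_nsmul (DirectSum.of (fun j => ZMod (N j)) j),
      Nat.smul_one_eq_cast, ZMod.natCast_self, map_zero]
  -- every N j is a power of p, and p-power kills c j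
  have hmk : ∀ j, ∃ k, N j = p ^ k := by
    intro j
    rcases Nat.eq_zero_or_pos (e j) with h0 | h1
    · exact ⟨0, by simp [hNdef, h0]⟩
    · obtain ⟨n, hn⟩ := hpG (c j)
      have hdvd : N j ∣ p ^ n := by
        have h5 := congrArg φ hn
        rw [map_nsmul, hphic, map_zero, ← map_nsmul (DirectSum.of (fun j => ZMod (N j)) j)] at h5
        have h6 : (p ^ n) • (1 : ZMod (N j)) = 0 := by
          apply DirectSum.of_injective j
          rw [h5, map_zero]
        rwa [Nat.smul_one_eq_cast, ZMod.natCast_eq_zero_iff] at h6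
      have hqd : q j ∣ p ^ n := dvd_trans (dvd_pow_self (q j) (Nat.pos_iff_ne_zero.mp h1)) hdvd
      have hqp : q j = p := (Nat.prime_dvd_prime_iff_eq (hq j) hp).mp ((hq j).dvd_of_dvd_pow hqd)
      exact ⟨e j, by show q j ^ e j = p ^ e j; rw [hqp]⟩
  set M : ℕ := 1 + ∑ j, (N j - 1) with hM
  -- M ≤ D via zero-sum free sequence
  have hMD : M ≤ D := by
    by_contra hlt
    push_neg at hlt
    set S : Multiset G := (Finset.univ.val : Multiset (Σ j, Fin (N j - 1))).map
      (fun x => φ.symm (DirectSum.of (fun j => ZMod (N j)) x.1 1)) with hS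
    have hcard : Multiset.card S = ∑ j, (N j - 1) := by
      rw [hS, Multiset.card_map]
      simp [Finset.card_univ]
    obtain ⟨T, hT, hT0, hTs⟩ := hD.1 S (by omega)
    exact hT0 (aux_zsf N hN1 φ T hT hTs)
  -- the ideal generated by the y (c j)
  set A : Ideal (RR p G) := Ideal.span (Set.range fun j => 1 - xe p G (c j)) with hA
  have hyA : ∀ g : G, 1 - xe p G g ∈ A := by
    intro g
    apply y_mem_span
    have hrepr : g = ∑ j, (φ g j).val • c j := by
      conv_lhs => rw [← φ.symm_apply_apply g, ← DirectSum.sum_univ_of (φ g)]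
      rw [map_sum]
      apply Finset.sum_congr rfl
      intro j _
      have h7 : DirectSum.of (fun j => ZMod (N j)) j (φ g j)
          = (φ g j).val • DirectSum.of (fun j => ZMod (N j)) j 1 := by
        rw [← map_nsmul, Nat.smul_one_eq_cast, ZMod.natCast_rightInverse _]
      rw [h7, map_nsmul]
    rw [hrepr]
    exact sum_mem fun j _ => nsmul_mem
      (AddSubmonoid.subset_closure (Set.mem_range_self j)) _
  -- the product is zero
  set P : RR p G := ∏ i : Fin ℓ, (1 - xe p G (f i)) with hPdef
  have hPA : P ∈ A ^ ℓ := by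
    have h8 := aux_prod_mem_pow A Finset.univ (fun i => 1 - xe p G (f i))
      (fun i _ => hyA (f i))
    rwa [Finset.card_univ, Fintype.card_fin] at h8
  have hAM : A ^ M = ⊥ := by
    apply le_bot_iff.mp
    calc A ^ M ≤ Ideal.span {r | ∃ s : Multiset ι, Multiset.card s = M ∧
          (s.map (fun j => 1 - xe p G (c j))).prod = r} := aux_span_pow _ M
      _ ≤ ⊥ := by
          rw [← Ideal.span_singleton_eq_bot.mpr rfl]
          apply Ideal.span_le.mpr
          rintro r ⟨s, hcards, rfl⟩
          have h9 : (s.map (fun j => 1 - xe p G (c j))).prod = 0 := by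
            apply aux_pigeon _ N
            · intro j
              obtain ⟨k, hk⟩ := hmk j
              rw [hk]
              exact y_nilpotent (c j) k (by rw [← hk]; exact hNc j)
            · omega
          simp [h9]
  have hP0 : P = 0 := by
    have h10 : P ∈ A ^ M := Ideal.pow_le_pow_right (le_trans hMD hℓ) hPA
    rw [hAM] at h10
    simpa using h10
  -- expand the product
  have hexp : P = ∑ t : Finset (Fin ℓ),
      AddMonoidAlgebra.single (∑ i ∈ t, f i) ((-1 : ZMod p) ^ t.card) := by
    calc P = ∏ i ∈ Finset.univ, (-xe p G (f i) + 1) := by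
            apply Finset.prod_congr rfl; intros; ring
      _ = ∑ t ∈ Finset.univ.powerset, (∏ i ∈ t, -xe p G (f i)) *
            ∏ i ∈ Finset.univ \ t, (1 : RR p G) := Finset.prod_add _ _ _
      _ = ∑ t : Finset (Fin ℓ), ∏ i ∈ t, -xe p G (f i) := by
            rw [Finset.powerset_univ]
            apply Finset.sum_congr rfl
            intros
            rw [Finset.prod_const_one, mul_one]
      _ = ∑ t : Finset (Fin ℓ),
            AddMonoidAlgebra.single (∑ i ∈ t, f i) ((-1 : ZMod p) ^ t.card) := by
            apply Finset.sum_congr rfl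
            intro t _
            have h11 : ∀ i : Fin ℓ, -xe p G (f i)
                = AddMonoidAlgebra.single (f i) (-1 : ZMod p) := by
              intro i
              rw [xe]
              exact (AddMonoidAlgebra.single_neg _ _).symm
            rw [Finset.prod_congr rfl (fun i _ => h11 i), AddMonoidAlgebra.prod_single,
              Finset.prod_const]
  -- evaluate coefficient at g
  have hcoeff : ∑ t : Finset (Fin ℓ),
      (if (∑ i ∈ t, f i) = g then (-1 : ZMod p) ^ t.card else 0) = (0 : ZMod p) := by
    have h12 : (∑ t : Finset (Fin ℓ),
        AddMonoidAlgebra.single (∑ i ∈ t, f i) ((-1 : ZMod p) ^ t.card)).coeff g = 0 := by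
      rw [← hexp, hP0]; rfl
    rw [AddMonoidAlgebra.coeff_sum, Finset.sum_apply'] at h12
    refine Eq.trans (Finset.sum_congr rfl fun t _ => ?_) h12
    exact (Finsupp.single_apply).symm
  rw [← Finset.sum_filter] at hcoeff
  rw [← Finset.sum_filter_add_sum_filter_not (Finset.univ.filter
    (fun t : Finset (Fin ℓ) => (∑ i ∈ t, f i) = g)) (fun t => Even t.card)] at hcoeff
  rw [Finset.filter_filter, Finset.filter_filter] at hcoeff
  have hE : ∑ t ∈ Finset.univ.filter (fun t : Finset (Fin ℓ) =>
      (∑ i ∈ t, f i) = g ∧ Even t.card), (-1 : ZMod p) ^ t.card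
      = ((Finset.univ.filter (fun t : Finset (Fin ℓ) =>
      (∑ i ∈ t, f i) = g ∧ Even t.card)).card : ZMod p) := by
    rw [Finset.sum_congr rfl (fun t ht => (Finset.mem_filter.mp ht).2.2.neg_one_pow),
      Finset.sum_const, nsmul_eq_mul, mul_one]
  have hO : ∑ t ∈ Finset.univ.filter (fun t : Finset (Fin ℓ) =>
      (∑ i ∈ t, f i) = g ∧ ¬ Even t.card), (-1 : ZMod p) ^ t.card
      = -((Finset.univ.filter (fun t : Finset (Fin ℓ) =>
      (∑ i ∈ t, f i) = g ∧ ¬ Even t.card)).card : ZMod p) := by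
    rw [Finset.sum_congr rfl (fun t ht =>
      (Nat.not_even_iff_odd.mp (Finset.mem_filter.mp ht).2.2).neg_one_pow),
      Finset.sum_const, nsmul_eq_mul, mul_neg_one]
  rw [hE, hO] at hcoeff
  have hfO : Finset.univ.filter (fun t : Finset (Fin ℓ) =>
      (∑ i ∈ t, f i) = g ∧ ¬ Even t.card)
      = Finset.univ.filter (fun t : Finset (Fin ℓ) => (∑ i ∈ t, f i) = g ∧ Odd t.card) := by
    apply Finset.filter_congr
    intro t _
    exact and_congr_right fun _ => Nat.not_even_iff_odd
  rw [hfO] at hcoeff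
  apply (ZMod.natCast_eq_natCast_iff _ _ _).mp
  linear_combination hcoeff
end

section
/- Let G be a finite abelian group of rank r(G) ≥ 2 that is not of the form C₂ ⊕ C_{2m}. Let S be a sequence over G of length D(G) + 1 such that every nonempty zero-sum subsequence of S has length at least D(G) - 1. Then the subgroup generated by the elements of S has rank at least 2. -/
open AddSubgroup

private lemma mult_le_add_decomp {α : Type*} {T u v : Multiset α} (h : T ≤ u + v) :
    ∃ t₁ t₂, t₁ ≤ u ∧ t₂ ≤ v ∧ T = t₁ + t₂ := by
  classical
  refine ⟨T - (T - u), T - u, ?_, ?_, ?_⟩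
  · rw [Multiset.le_iff_count] at h ⊢
    intro a
    have := h a
    simp only [Multiset.count_sub, Multiset.count_add] at *
    omega
  · rw [Multiset.sub_le_iff_le_add]
    rwa [add_comm] at h
  · rw [tsub_add_cancel_of_le (tsub_le_self : T - u ≤ T)]

theorem stmt_9 (G : Type*) [AddCommGroup G] [Fintype G]
    (hrank : ¬ IsAddCyclic G)
    (hform : ∀ m : ℕ, 0 < m → ¬ Nonempty (G ≃+ (ZMod 2 × ZMod (2 * m))))
    (D : ℕ)
    (hD : IsLeast {t : ℕ | ∀ S : Multiset G, t ≤ Multiset.card S →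
      ∃ T ≤ S, T ≠ 0 ∧ T.sum = 0} D)
    (S : Multiset G) (hcard : Multiset.card S = D + 1)
    (hzs : ∀ T ≤ S, T ≠ 0 → T.sum = 0 → D - 1 ≤ Multiset.card T) :
    ¬ IsAddCyclic ↥(AddSubgroup.closure {x : G | x ∈ S}) := by
  intro hcyc
  classical
  -- a generator of the closure
  obtain ⟨x, hx⟩ := hcyc.exists_zsmul_surjective
  have hmem : ∀ s ∈ S, s ∈ zmultiples (x : G) := by
    intro s hs
    have hsH : s ∈ AddSubgroup.closure {x : G | x ∈ S} := AddSubgroup.subset_closure hs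
    obtain ⟨k, hk⟩ := hx ⟨s, hsH⟩
    exact ⟨k, by simpa [Subtype.ext_iff] using hk⟩
  set E := AddMonoid.exponent G with hEdef
  have hEE : AddMonoid.ExponentExists G := by exact AddMonoid.ExponentExists.of_finite
  have hEpos : 0 < E := hEE.exponent_pos
  -- pigeonhole: D ≤ E + 1
  set L := S.toList with hLdef
  have hLlen : L.length = D + 1 := by rw [Multiset.length_toList, hcard]
  have hmemL : ∀ s ∈ L, s ∈ zmultiples (x : G) := fun s hs =>
    hmem s (by rwa [Multiset.mem_toList] at hs)
  have key : ∀ i j : ℕ, i < j → j < D - 1 → (L.take i).sum = (L.take j).sum → False := by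
    intro i j hij hjD hsum
    set t : List G := (L.take j).drop i with ht
    have hsub : t.Sublist L := ((L.take j).drop_sublist i).trans (L.take_sublist j)
    have htS : (t : Multiset G) ≤ S := by
      rw [← S.coe_toList]
      exact Multiset.coe_le.mpr hsub.subperm
    have hlen : t.length = j - i := by
      simp only [ht, List.length_drop, List.length_take, hLlen]
      omega
    have hcardt : Multiset.card (t : Multiset G) = j - i := by
      simpa using hlen
    have hsum0 : t.sum = 0 := by
      have h1 : ((L.take j).take i).sum + t.sum = (L.take j).sum :=
        List.sum_take_add_sum_drop _ i
      rw [List.take_take, min_eq_left hij.le, ← hsum] at h1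
      exact (add_eq_left).mp h1
    have := hzs t htS
      (by rw [Ne, ← Multiset.card_eq_zero, hcardt]; omega)
      (by simpa using hsum0)
    omega
  have hDE : D ≤ E + 1 := by
    have hinj : Function.Injective (fun i : Fin (D - 1) =>
        (⟨(L.take (i : ℕ)).sum,
          list_sum_mem (fun y hy => hmemL y ((L.take_sublist _).subset hy))⟩ :
          ↥(zmultiples (x : G)))) := by
      intro i j hij
      simp only [Subtype.mk.injEq] at hij
      by_contra hne
      have hne' : (i : ℕ) ≠ (j : ℕ) := fun h => hne (Fin.ext h)
      rcases hne'.lt_or_gt with h | h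
      · exact key i j h j.isLt hij
      · exact key j i h i.isLt hij.symm
    have hle := Nat.card_le_card_of_injective _ hinj
    rw [Nat.card_eq_fintype_card, Fintype.card_fin, Nat.card_zmultiples] at hle
    have hord : addOrderOf (x : G) ≤ E :=
      Nat.le_of_dvd hEpos (AddMonoid.addOrder_dvd_exponent _)
    omega
  -- element of order E
  obtain ⟨g, hg⟩ := AddMonoid.exists_addOrderOf_eq_exponent hEE
  have hgtop : zmultiples g ≠ ⊤ := by
    intro htop
    exact hrank ⟨g, fun y => mem_zmultiples_iff.mp (htop ▸ AddSubgroup.mem_top y)⟩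
  obtain ⟨e₀, he₀⟩ : ∃ e, e ∉ zmultiples g := by
    by_contra h
    push_neg at h
    exact hgtop ((AddSubgroup.eq_top_iff' _).mpr h)
  have hQnt : Nontrivial (G ⧸ zmultiples g) :=
    ⟨⟨QuotientAddGroup.mk e₀, 0, by rwa [Ne, QuotientAddGroup.eq_zero_iff]⟩⟩
  rcases lt_or_ge (Nat.card (G ⧸ zmultiples g)) 3 with hQ | hQ
  · -- |Q| = 2 : G ≅ ZMod 2 × ZMod E
    have hQ2 : Nat.card (G ⧸ zmultiples g) = 2 := by
      have := Finite.one_lt_card_iff_nontrivial.mpr hQnt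
      omega
    have hcardG : Nat.card G = 2 * E := by
      rw [AddSubgroup.card_eq_card_quotient_mul_card_addSubgroup (zmultiples g),
        hQ2, Nat.card_zmultiples, hg]
    have hEeven : 2 ∣ E := by
      haveI : Fact (Nat.Prime 2) := ⟨Nat.prime_two⟩
      obtain ⟨t, ht⟩ := exists_prime_addOrderOf_dvd_card (G := G) 2
        (by rw [← Nat.card_eq_fintype_card, hcardG]; exact ⟨E, rfl⟩)
      rw [← ht]
      exact AddMonoid.addOrder_dvd_exponent t
    have hmkmem : ((2 : ℤ) • e₀ : G) ∈ zmultiples g := by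
      have hdvd : addOrderOf (QuotientAddGroup.mk e₀ : G ⧸ zmultiples g) ∣ 2 := by
        rw [← hQ2]; exact addOrderOf_dvd_natCard _
      have h2 : (QuotientAddGroup.mk ((2 : ℤ) • e₀) : G ⧸ zmultiples g) = 0 := by
        have hmap := map_zsmul (QuotientAddGroup.mk' (zmultiples g)) 2 e₀
        simp only [QuotientAddGroup.mk'_apply] at hmap
        rw [hmap, show (2 : ℤ) = ((2 : ℕ) : ℤ) by norm_num, natCast_zsmul]
        exact addOrderOf_dvd_iff_nsmul_eq_zero.mp hdvd
      exact (QuotientAddGroup.eq_zero_iff _).mp h2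
    obtain ⟨k, hk⟩ := mem_zmultiples_iff.mp hmkmem
    obtain ⟨s, hs⟩ := hEeven
    have hspos : 0 < s := by omega
    have hEg : (E : ℤ) • g = 0 := by
      have h := addOrderOf_nsmul_eq_zero g
      rw [hg, ← hEdef] at h
      rw [natCast_zsmul]
      exact h
    have hEe₀ : (E : ℤ) • e₀ = 0 := by
      have h := AddMonoid.exponent_nsmul_eq_zero e₀
      rw [← hEdef] at h
      rw [natCast_zsmul]
      exact h
    have hks : (E : ℤ) ∣ (s : ℤ) * k := by
      have hz : ((s : ℤ) * k) • g = 0 := by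
        rw [mul_smul, hk, ← mul_smul, show (s : ℤ) * 2 = (E : ℤ) by push_cast [hs]; ring]
        exact hEe₀
      have h := (addOrderOf_dvd_iff_zsmul_eq_zero).mpr hz
      rwa [hg, ← hEdef] at h
    have h2k : (2 : ℤ) ∣ k := by
      obtain ⟨c, hc⟩ := hks
      refine ⟨c, ?_⟩
      have hs' : (E : ℤ) = 2 * (s : ℤ) := by push_cast [hs]; ring
      rw [hs'] at hc
      have hsne : (s : ℤ) ≠ 0 := by exact_mod_cast hspos.ne'
      have h : (s : ℤ) * k = (s : ℤ) * (2 * c) := by linarith [hc]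
      exact mul_left_cancel₀ hsne h
    obtain ⟨c, hc⟩ := h2k
    set e' := e₀ - c • g with he'
    have h2e' : (2 : ℤ) • e' = 0 := by
      rw [he', smul_sub, ← hk, hc, ← mul_smul, mul_comm, mul_smul, sub_self]
    have he'mem : e' ∉ zmultiples g := by
      intro hmem'
      apply he₀
      have h : e₀ = e' + c • g := by rw [he']; abel
      rw [h]
      exact add_mem hmem' (zsmul_mem (mem_zmultiples g) c)
    haveI : NeZero E := ⟨by omega⟩
    set f₁ : ZMod 2 →+ G := ZMod.lift 2 ⟨zmultiplesHom G e', by simpa using h2e'⟩ with hf₁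
    set f₂ : ZMod E →+ G := ZMod.lift E ⟨zmultiplesHom G g, by simpa using hEg⟩ with hf₂
    set φ := f₁.coprod f₂ with hφ
    have hinjφ : Function.Injective φ := by
      rw [injective_iff_map_eq_zero]
      rintro ⟨X, Y⟩ hXY
      obtain ⟨u, rfl⟩ := ZMod.intCast_surjective X
      obtain ⟨m, rfl⟩ := ZMod.intCast_surjective Y
      simp only [hφ, AddMonoidHom.coprod_apply, hf₁, hf₂, ZMod.lift_coe,
        zmultiplesHom_apply] at hXY
      have hu : u • e' = (u % 2) • e' := by
        conv_lhs => rw [← Int.emod_add_mul_ediv u 2]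
        rw [add_smul, mul_smul, smul_comm, h2e', smul_zero, add_zero]
      rcases Int.emod_two_eq u with h | h
      · rw [hu, h, zero_zsmul, zero_add] at hXY
        have hm : ((m : ZMod E) = 0) := by
          rw [ZMod.intCast_zmod_eq_zero_iff_dvd]
          have hd := (addOrderOf_dvd_iff_zsmul_eq_zero).mpr hXY
          rwa [hg, ← hEdef] at hd
        have hX : ((u : ZMod 2) = 0) := by
          rw [ZMod.intCast_zmod_eq_zero_iff_dvd]
          exact_mod_cast Int.dvd_of_emod_eq_zero h
        rw [hm, hX]
        rfl
      · rw [hu, h, one_zsmul] at hXY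
        exact absurd (by
          have hb : e' = -(m • g) := eq_neg_of_add_eq_zero_left hXY
          rw [hb]
          exact neg_mem (zsmul_mem (mem_zmultiples g) m)) he'mem
    have hbij : Function.Bijective φ := by
      rw [Fintype.bijective_iff_injective_and_card]
      refine ⟨hinjφ, ?_⟩
      rw [Fintype.card_prod, ZMod.card, ZMod.card, ← Nat.card_eq_fintype_card (α := G), hcardG]
    have equiv' : ZMod 2 × ZMod (2 * s) ≃+ G := by
      rw [← hs]
      exact AddEquiv.ofBijective φ hbij
    exact hform s hspos ⟨equiv'.symm⟩
  · -- |Q| ≥ 3 : find a, b with a, b, a + b ∉ zmultiples g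
    obtain ⟨qa, qb, hqa, hqb, hqab⟩ :
        ∃ a b : G ⧸ zmultiples g, a ≠ 0 ∧ b ≠ 0 ∧ a + b ≠ 0 := by
      obtain ⟨q, hq⟩ := exists_ne (0 : G ⧸ zmultiples g)
      by_cases h2 : q + q = 0
      · by_contra hno
        push_neg at hno
        have hall : ∀ c : G ⧸ zmultiples g, c = 0 ∨ c = q := by
          intro c
          by_contra hc
          push_neg at hc
          have hcq := hno c q hc.1 hq
          apply hc.2
          have h : c = -q := eq_neg_of_add_eq_zero_left hcq
          rw [h, neg_eq_of_add_eq_zero_left h2]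
        have hsurj : Function.Surjective (fun b : Bool => if b then q else 0) := by
          intro c
          rcases hall c with h | h
          · exact ⟨false, h.symm⟩
          · exact ⟨true, h.symm⟩
        have hle := Nat.card_le_card_of_surjective _ hsurj
        rw [show Nat.card Bool = 2 by simp] at hle
        omega
      · exact ⟨q, q, hq, hq, h2⟩
    obtain ⟨a, rfl⟩ := QuotientAddGroup.mk_surjective qa
    obtain ⟨b, rfl⟩ := QuotientAddGroup.mk_surjective qb
    rw [Ne, QuotientAddGroup.eq_zero_iff] at hqa hqb
    have hab : a + b ∉ zmultiples g := by
      intro hm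
      apply hqab
      have : (QuotientAddGroup.mk (a + b) : G ⧸ zmultiples g) = 0 :=
        (QuotientAddGroup.eq_zero_iff _).mpr hm
      simpa using this
    set C : Multiset G := Multiset.replicate (E - 1) g + ({a} + {b}) with hC
    have hcC : Multiset.card C = E + 1 := by
      simp only [hC, Multiset.card_add, Multiset.card_replicate, Multiset.card_singleton]
      omega
    obtain ⟨T, hTC, hT0, hTsum⟩ := hD.1 C (by rw [hcC]; omega)
    obtain ⟨T₁, T₂₃, hT₁, hT₂₃, rfl⟩ := mult_le_add_decomp hTC
    obtain ⟨T₂, T₃, hT₂, hT₃, rfl⟩ := mult_le_add_decomp hT₂₃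
    obtain ⟨k, hkE, rfl⟩ := Multiset.le_replicate_iff.mp hT₁
    have hgmem : ∀ n : ℕ, n • g ∈ zmultiples g := fun n => nsmul_mem (mem_zmultiples g) n
    rcases Multiset.le_singleton.mp hT₂ with rfl | rfl <;>
      rcases Multiset.le_singleton.mp hT₃ with rfl | rfl
    · simp only [Multiset.sum_add, Multiset.sum_replicate, Multiset.sum_zero, add_zero]
        at hTsum
      have hk0 : k ≠ 0 := by
        rintro rfl
        simp at hT0
      have hdvd := addOrderOf_dvd_iff_nsmul_eq_zero.mpr hTsum
      rw [hg, ← hEdef] at hdvd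
      have := Nat.le_of_dvd (by omega) hdvd
      omega
    · simp only [Multiset.sum_add, Multiset.sum_replicate, Multiset.sum_zero,
        Multiset.sum_singleton, add_zero, zero_add] at hTsum
      apply hqb
      have hb : b = -(k • g) := eq_neg_of_add_eq_zero_right hTsum
      rw [hb]
      exact neg_mem (hgmem k)
    · simp only [Multiset.sum_add, Multiset.sum_replicate, Multiset.sum_zero,
        Multiset.sum_singleton, add_zero, zero_add] at hTsum
      apply hqa
      have ha : a = -(k • g) := eq_neg_of_add_eq_zero_right hTsum
      rw [ha]
      exact neg_mem (hgmem k)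
    · simp only [Multiset.sum_add, Multiset.sum_replicate, Multiset.sum_singleton] at hTsum
      apply hab
      have hab' : a + b = -(k • g) := eq_neg_of_add_eq_zero_right hTsum
      rw [hab']
      exact neg_mem (hgmem k)
end

section
/- Let G be a cyclic group of order n and S a sequence over G of length at least n such that every nonempty zero-sum subsequence of S has length at least n. Then S = g^{|S|} for some generator g of G, i.e., all terms of S are equal to a single generator. -/
private lemma aux_partial_sums_inj {G : Type*} [AddCommGroup G] {n : ℕ} {S : Multiset G}
    (hzs : ∀ T ≤ S, T ≠ 0 → T.sum = 0 → n ≤ Multiset.card T)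
    (L : List G) (hL : (L : Multiset G) ≤ S) (hlen : L.length = n) :
    Function.Injective (fun i : Fin n => (L.take ((i : ℕ) + 1)).sum) := by
  have key : ∀ i j : Fin n, (i : ℕ) < (j : ℕ) →
      (L.take ((i : ℕ) + 1)).sum ≠ (L.take ((j : ℕ) + 1)).sum := by
    intro i j hij heq
    set B := (L.drop ((i : ℕ) + 1)).take ((j : ℕ) - (i : ℕ)) with hB
    have hsplit : L.take ((j : ℕ) + 1) = L.take ((i : ℕ) + 1) ++ B := by
      have h : (j : ℕ) + 1 = ((i : ℕ) + 1) + ((j : ℕ) - (i : ℕ)) := by omega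
      rw [h, List.take_add]
    have hBsum : B.sum = 0 := by
      rw [hsplit, List.sum_append] at heq
      exact (left_eq_add.mp heq)
    have hjlt : (j : ℕ) < n := j.isLt
    have hBlen : B.length = (j : ℕ) - (i : ℕ) := by
      simp only [hB, List.length_take, List.length_drop, hlen]
      omega
    have hBle : (B : Multiset G) ≤ S := by
      refine le_trans ?_ hL
      exact Multiset.coe_le.mpr (((List.take_sublist _ _).trans (List.drop_sublist _ _)).subperm)
    have hBne : (B : Multiset G) ≠ 0 := by
      rw [← Multiset.card_pos]
      simp only [Multiset.coe_card, hBlen]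
      omega
    have := hzs (B : Multiset G) hBle hBne (by simpa using hBsum)
    simp only [Multiset.coe_card, hBlen] at this
    omega
  intro i j h
  rcases lt_trichotomy i j with hlt | he | hlt
  · exact absurd h (key i j hlt)
  · exact he
  · exact absurd h.symm (key j i hlt)

theorem stmt_10 (G : Type*) [AddCommGroup G] [Fintype G] [IsAddCyclic G]
    (n : ℕ) (hn : Fintype.card G = n)
    (S : Multiset G) (hcard : n ≤ Multiset.card S)
    (hzs : ∀ T ≤ S, T ≠ 0 → T.sum = 0 → n ≤ Multiset.card T) :
    ∃ g : G, addOrderOf g = n ∧ S = Multiset.replicate (Multiset.card S) g := by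
  classical
  subst hn
  set n := Fintype.card G with hn
  have hn1 : 1 ≤ n := Fintype.card_pos
  haveI : NeZero n := ⟨by omega⟩
  have hS0 : S ≠ 0 := by
    intro h
    rw [h] at hcard
    simp at hcard
    omega
  obtain ⟨g, hg⟩ := Multiset.exists_mem_of_ne_zero hS0
  have hall : ∀ a ∈ S, a = g := by
    intro a ha
    by_contra hab
    haveI : Nontrivial G := ⟨⟨a, g, hab⟩⟩
    have h2n : 2 ≤ n := Fintype.one_lt_card
    obtain ⟨S₁, h1⟩ := Multiset.exists_cons_of_mem ha
    have hg1 : g ∈ S₁ := by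
      have hg' := hg
      rw [h1, Multiset.mem_cons] at hg'
      rcases hg' with h | h
      · exact absurd h.symm hab
      · exact h
    obtain ⟨S₂, h2⟩ := Multiset.exists_cons_of_mem hg1
    have hcard2 : n - 2 ≤ Multiset.card S₂ := by
      have : Multiset.card S = Multiset.card S₂ + 2 := by
        rw [h1, h2]; simp
      omega
    set R := S₂.toList.take (n - 2) with hR
    have hRlen : R.length = n - 2 := by
      rw [hR, List.length_take, Multiset.length_toList]
      omega
    have hRle : (R : Multiset G) ≤ S₂ := by
      have : (R : Multiset G) ≤ (S₂.toList : Multiset G) :=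
        Multiset.coe_le.mpr (List.take_sublist _ _).subperm
      rwa [Multiset.coe_toList] at this
    set L1 := a :: g :: R with hL1def
    set L2 := g :: a :: R with hL2def
    have hL1 : (L1 : Multiset G) ≤ S := by
      rw [h1, h2, hL1def]
      simp only [← Multiset.cons_coe]
      exact Multiset.cons_le_cons _ (Multiset.cons_le_cons _ hRle)
    have hL2 : (L2 : Multiset G) ≤ S := by
      rw [h1, h2, hL2def]
      simp only [← Multiset.cons_coe]
      have : (g ::ₘ a ::ₘ (R : Multiset G)) = a ::ₘ g ::ₘ (R : Multiset G) :=
        Multiset.cons_swap _ _ _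
      rw [this]
      exact Multiset.cons_le_cons _ (Multiset.cons_le_cons _ hRle)
    have hlen1 : L1.length = n := by simp [hL1def, hRlen]; omega
    have hlen2 : L2.length = n := by simp [hL2def, hRlen]; omega
    set q1 : Fin n → G := fun i => (L1.take ((i : ℕ) + 1)).sum with hq1
    set q2 : Fin n → G := fun i => (L2.take ((i : ℕ) + 1)).sum with hq2
    have inj1 : Function.Injective q1 := aux_partial_sums_inj hzs L1 hL1 hlen1
    have inj2 : Function.Injective q2 := aux_partial_sums_inj hzs L2 hL2 hlen2
    have bij2 : Function.Bijective q2 :=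
      (Fintype.bijective_iff_injective_and_card q2).mpr ⟨inj2, by simp [hn]⟩
    have hag : ∀ i : Fin n, (i : ℕ) ≠ 0 → q1 i = q2 i := by
      intro i hi
      obtain ⟨k, hk⟩ : ∃ k, (i : ℕ) = k + 1 := ⟨(i : ℕ) - 1, by omega⟩
      simp only [hq1, hq2, hL1def, hL2def, hk]
      simp [List.take_succ_cons, add_left_comm]
    obtain ⟨j, hj⟩ := bij2.surjective (q1 0)
    by_cases hj0 : j = 0
    · subst hj0
      have e1 : q1 0 = a := by simp [hq1, hL1def]
      have e2 : q2 0 = g := by simp [hq2, hL2def]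
      rw [e1, e2] at hj
      exact hab hj.symm
    · have hjv : (j : ℕ) ≠ 0 := by
        intro h
        exact hj0 (Fin.ext h)
      rw [← hag j hjv] at hj
      exact hj0 (inj1 hj)
  have hSrep : S = Multiset.replicate (Multiset.card S) g :=
    Multiset.eq_replicate_card.mpr hall
  refine ⟨g, ?_, hSrep⟩
  have hdvd : addOrderOf g ∣ n := addOrderOf_dvd_card
  have hk1 : 0 < addOrderOf g := addOrderOf_pos g
  have hkle : addOrderOf g ≤ n := Nat.le_of_dvd (by omega) hdvd
  have hrep : Multiset.replicate (addOrderOf g) g ≤ S := by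
    rw [← Multiset.le_count_iff_replicate_le]
    have : Multiset.count g S = Multiset.card S := by
      rw [hSrep]; simp
    omega
  have hsum : (Multiset.replicate (addOrderOf g) g).sum = 0 := by
    rw [Multiset.sum_replicate]
    exact addOrderOf_nsmul_eq_zero g
  have hne : Multiset.replicate (addOrderOf g) g ≠ 0 := by
    rw [← Multiset.card_pos]
    simpa using hk1
  have := hzs _ hrep hne hsum
  simp at this
  omega
end

section
/- Let G = C_{n₁} ⊕ ⋯ ⊕ C_{n_r} with 1 < n₁ | n₂ | ⋯ | n_r and r ≥ 2, let D*(G) = 1 + Σ(nᵢ - 1), and let k be an integer with exp(G) ≤ D*(G) - k ≤ 2·exp(G) - 1. Then s_{≤ D*(G)-k}(G) ≥ D*(G) + k; that is, there exists a sequence over G of length D*(G) + k - 1 having no nonempty zero-sum subsequence of length at most D*(G) - k. -/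
namespace Stmt12Aux

open Finset Multiset

theorem main (r : ℕ) (n : Fin r → ℕ) (hn : ∀ i, 2 ≤ n i) (L : Fin r)
    (m x : ℕ) (hx : x + m + 1 = 2 * n L) :
    ∃ S : Multiset (∀ i : Fin r, ZMod (n i)),
      Multiset.card S = x + ∑ i ∈ Finset.univ.erase L, 2 * (n i - 1) ∧
      ∀ T ≤ S, T ≠ 0 → T.sum = 0 → ¬ Multiset.card T ≤ m := by
  classical
  set e : Fin r → (∀ i : Fin r, ZMod (n i)) := fun i => Pi.single i 1 with he
  set f : Fin r → (∀ i : Fin r, ZMod (n i)) := fun i => e L - e i with hf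
  set s : Finset (Fin r) := Finset.univ.erase L with hs
  have hone : ∀ i : Fin r, (1 : ZMod (n i)) ≠ 0 := by
    intro i
    haveI : Fact (1 < n i) := ⟨by have := hn i; omega⟩
    exact one_ne_zero
  have he_same : ∀ i, e i i = 1 := fun i => Pi.single_eq_same i 1
  have he_ne : ∀ i j : Fin r, j ≠ i → e i j = 0 := fun i j h => Pi.single_eq_of_ne h 1
  have hmem : ∀ i ∈ s, i ≠ L := fun i hi => (Finset.mem_erase.mp hi).1
  -- distinctness facts
  have hee : ∀ i j : Fin r, e i = e j → i = j := by
    intro i j h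
    by_contra hij
    have := congrFun h i
    rw [he_same i, he_ne j i hij] at this
    exact hone i this
  have hLe : ∀ i ∈ s, e L ≠ e i := fun i hi h => (hmem i hi) (hee i L h.symm ▸ rfl)
  have hLe' : ∀ i ∈ s, e L ≠ e i := by
    intro i hi h
    exact (hmem i hi) ((hee L i h).symm)
  have hLf : ∀ i ∈ s, e L ≠ f i := by
    intro i hi h
    have := congrFun h i
    rw [he_ne L i (fun hh => hmem i hi hh), hf] at this
    simp only [Pi.sub_apply] at this
    rw [he_ne L i (fun hh => hmem i hi hh), he_same i, zero_sub] at this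
    exact hone i (neg_eq_zero.mp this.symm)
  have hef : ∀ i ∈ s, ∀ j ∈ s, e i ≠ f j := by
    intro i hi j hj h
    have := congrFun h L
    rw [he_ne i L (fun hh => hmem i hi hh.symm), hf] at this
    simp only [Pi.sub_apply] at this
    rw [he_same L, he_ne j L (fun hh => hmem j hj hh.symm), sub_zero] at this
    exact hone L this.symm
  have hff : ∀ i ∈ s, ∀ j ∈ s, f i = f j → i = j := by
    intro i _ j _ h
    rw [hf] at h
    exact hee i j (sub_right_injective h)
  -- the sequence
  set S : Multiset (∀ i : Fin r, ZMod (n i)) := Multiset.replicate x (e L) +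
      ∑ i ∈ s, (Multiset.replicate (n i - 1) (e i) +
        Multiset.replicate (n i - 1) (f i)) with hS
  refine ⟨S, ?_, ?_⟩
  · rw [hS]
    rw [Multiset.card_add, Multiset.card_replicate, Multiset.card_sum s]
    congr 1
    refine Finset.sum_congr rfl fun i _ => ?_
    simp only [Multiset.card_add, Multiset.card_replicate]
    omega
  intro T hT hT0 hTsum hTcard
  set F : Finset (∀ i : Fin r, ZMod (n i)) := insert (e L) (s.image e ∪ s.image f) with hF
  have hTF : T.toFinset ⊆ F := by
    intro g hg
    have hgS : g ∈ S := Multiset.mem_of_le hT (Multiset.mem_toFinset.mp hg)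
    rw [hS] at hgS
    rcases Multiset.mem_add.mp hgS with h | h
    · rw [Multiset.eq_of_mem_replicate h]
      exact Finset.mem_insert_self _ _
    · rw [Multiset.mem_sum] at h
      obtain ⟨i, hi, hgi⟩ := h
      rcases Multiset.mem_add.mp hgi with h' | h'
      · rw [Multiset.eq_of_mem_replicate h']
        exact Finset.mem_insert_of_mem
          (Finset.mem_union_left _ (Finset.mem_image_of_mem e hi))
      · rw [Multiset.eq_of_mem_replicate h']
        exact Finset.mem_insert_of_mem
          (Finset.mem_union_right _ (Finset.mem_image_of_mem f hi))
  have hLnotmem : e L ∉ s.image e ∪ s.image f := by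
    intro h
    rcases Finset.mem_union.mp h with h' | h'
    · obtain ⟨i, hi, hgi⟩ := Finset.mem_image.mp h'
      exact hLe' i hi hgi.symm
    · obtain ⟨i, hi, hgi⟩ := Finset.mem_image.mp h'
      exact hLf i hi hgi.symm
  have hdisj : Disjoint (s.image e) (s.image f) := by
    rw [Finset.disjoint_left]
    intro g hg hg'
    obtain ⟨i, hi, hgi⟩ := Finset.mem_image.mp hg
    obtain ⟨j, hj, hgj⟩ := Finset.mem_image.mp hg'
    exact hef i hi j hj (hgi.trans hgj.symm)
  have hzero : ∀ g ∈ F, g ∉ T.toFinset → T.count g = 0 := by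
    intro g _ hg
    rw [Multiset.count_eq_zero]
    exact fun h => hg (Multiset.mem_toFinset.mpr h)
  -- card formula
  have hcardT : Multiset.card T = T.count (e L) +
      ((∑ i ∈ s, T.count (e i)) + ∑ i ∈ s, T.count (f i)) := by
    rw [← Multiset.toFinset_sum_count_eq T,
      Finset.sum_subset hTF hzero, hF,
      Finset.sum_insert hLnotmem, Finset.sum_union hdisj,
      Finset.sum_image (fun i hi j hj h => hee i j h),
      Finset.sum_image (fun i hi j hj h => hff i hi j hj h)]
  -- sum formula
  have hsumT : (0 : ∀ i : Fin r, ZMod (n i)) = T.count (e L) • e L +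
      ((∑ i ∈ s, T.count (e i) • e i) + ∑ i ∈ s, T.count (f i) • f i) := by
    have h1 : T.sum = ∑ a ∈ T.toFinset, T.count a • a := by
      conv_lhs => rw [← Multiset.map_id T]
      rw [Finset.sum_multiset_map_count]
      simp
    rw [← hTsum, h1,
      Finset.sum_subset hTF (fun g hg hg' => by rw [hzero g hg hg', zero_smul]), hF,
      Finset.sum_insert hLnotmem, Finset.sum_union hdisj,
      Finset.sum_image (fun i hi j hj h => hee i j h),
      Finset.sum_image (fun i hi j hj h => hff i hi j hj h)]
  -- count bounds
  have hcount : ∀ g, T.count g ≤ S.count g := fun g => Multiset.le_iff_count.mp hT g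
  have ha : T.count (e L) ≤ x := by
    refine le_trans (hcount _) ?_
    rw [hS, Multiset.count_add, Multiset.count_replicate, if_pos rfl,
      Multiset.count_sum']
    have : ∑ i ∈ s, Multiset.count (e L)
        (Multiset.replicate (n i - 1) (e i) + Multiset.replicate (n i - 1) (f i)) = 0 := by
      refine Finset.sum_eq_zero fun i hi => ?_
      rw [Multiset.count_add, Multiset.count_replicate, Multiset.count_replicate,
        if_neg (fun h => hLe' i hi h.symm), if_neg (fun h => hLf i hi h.symm)]
      rfl
    omega
  have hb : ∀ j ∈ s, T.count (e j) ≤ n j - 1 := by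
    intro j hj
    refine le_trans (hcount _) ?_
    rw [hS, Multiset.count_add, Multiset.count_replicate,
      if_neg (hLe' j hj), Multiset.count_sum']
    rw [Finset.sum_eq_single_of_mem j hj (fun i hi hij => by
      rw [Multiset.count_add, Multiset.count_replicate, Multiset.count_replicate,
        if_neg (fun h => hij (hee i j h)), if_neg (fun h => hef j hj i hi h.symm)]
      rfl)]
    rw [Multiset.count_add, Multiset.count_replicate, Multiset.count_replicate,
      if_pos rfl, if_neg (fun h => hef j hj j hj h.symm)]
    omega
  have hc : ∀ j ∈ s, T.count (f j) ≤ n j - 1 := by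
    intro j hj
    refine le_trans (hcount _) ?_
    rw [hS, Multiset.count_add, Multiset.count_replicate,
      if_neg (hLf j hj), Multiset.count_sum']
    rw [Finset.sum_eq_single_of_mem j hj (fun i hi hij => by
      rw [Multiset.count_add, Multiset.count_replicate, Multiset.count_replicate,
        if_neg (hef i hi j hj), if_neg (fun h => hij (hff i hi j hj h))]
      rfl)]
    rw [Multiset.count_add, Multiset.count_replicate, Multiset.count_replicate,
      if_neg (hef j hj j hj), if_pos rfl]
    omega
  -- coordinate j ∈ s : counts of e j and f j agree
  have hbc : ∀ j ∈ s, T.count (e j) = T.count (f j) := by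
    intro j hj
    have h0 := congrFun hsumT j
    rw [Pi.zero_apply, Pi.add_apply, Pi.add_apply, Pi.smul_apply,
      he_ne L j (hmem j hj)] at h0
    rw [Finset.sum_apply, Finset.sum_apply] at h0
    rw [Finset.sum_eq_single_of_mem j hj (fun i hi hij => by
      rw [Pi.smul_apply, he_ne i j (fun h => hij h.symm), smul_zero])] at h0
    rw [Finset.sum_eq_single_of_mem j hj (fun i hi hij => by
      rw [Pi.smul_apply, hf]
      simp only [Pi.sub_apply]
      rw [he_ne L j (hmem j hj), he_ne i j (fun h => hij h.symm), sub_zero, smul_zero])] at h0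
    rw [Pi.smul_apply, Pi.smul_apply, he_same j, hf] at h0
    simp only [Pi.sub_apply] at h0
    rw [he_ne L j (hmem j hj), he_same j, zero_sub, smul_zero, zero_add,
      nsmul_eq_mul, nsmul_eq_mul, mul_one, mul_neg, mul_one] at h0
    have hcast : (T.count (e j) : ZMod (n j)) = (T.count (f j) : ZMod (n j)) := by
      have := h0.symm
      rw [add_neg_eq_zero] at this
      exact this
    have hmod := (ZMod.natCast_eq_natCast_iff _ _ _).mp hcast
    have hmod' : T.count (e j) % n j = T.count (f j) % n j := hmod
    have h1 := hb j hj
    have h2 := hc j hj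
    have h3 := hn j
    have h1' : T.count (e j) < n j := by omega
    have h2' : T.count (f j) < n j := by omega
    rwa [Nat.mod_eq_of_lt h1', Nat.mod_eq_of_lt h2'] at hmod'
  -- coordinate L : divisibility
  have hdvdL : n L ∣ T.count (e L) + ∑ i ∈ s, T.count (f i) := by
    have h0 := congrFun hsumT L
    rw [Pi.zero_apply, Pi.add_apply, Pi.add_apply, Pi.smul_apply, he_same L] at h0
    rw [Finset.sum_apply, Finset.sum_apply] at h0
    rw [Finset.sum_eq_zero (fun i hi => by
      rw [Pi.smul_apply, he_ne i L (fun h => hmem i hi h.symm), smul_zero])] at h0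
    have hfL : ∀ i ∈ s, (T.count (f i) • f i) L = (T.count (f i) : ZMod (n L)) := by
      intro i hi
      rw [Pi.smul_apply, hf]
      simp only [Pi.sub_apply]
      rw [he_same L, he_ne i L (fun h => hmem i hi h.symm), sub_zero, nsmul_eq_mul, mul_one]
    rw [Finset.sum_congr rfl hfL] at h0
    rw [← ZMod.natCast_eq_zero_iff]
    push_cast
    rw [nsmul_eq_mul, mul_one, zero_add] at h0
    exact h0.symm
  -- conclude
  have hpos : 0 < Multiset.card T := Multiset.card_pos.mpr hT0
  have hsum_bc : ∑ i ∈ s, T.count (e i) = ∑ i ∈ s, T.count (f i) :=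
    Finset.sum_congr rfl hbc
  set N := T.count (e L) + ∑ i ∈ s, T.count (f i) with hN
  have hNpos : 0 < N := by
    rcases Nat.eq_zero_or_pos N with h | h
    · exfalso
      have : Multiset.card T = 0 := by omega
      omega
    · exact h
  have hNge : n L ≤ N := Nat.le_of_dvd hNpos hdvdL
  omega

end Stmt12Aux

/-- Theorem (lower bound for `s_{≤ D*(G)-k}(G)`): writing `m = D*(G) - k`
with `exp(G) ≤ m ≤ 2 exp(G) - 1`, there is a sequence over `G` of length
`D*(G) + k - 1 = 2 D*(G) - m - 1` with no nonempty zero-sum subsequence of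
length at most `m`. -/
theorem stmt_12 (r : ℕ) (hr : 2 ≤ r) (n : Fin r → ℕ)
    (h1 : 1 < n ⟨0, by omega⟩) (hdvd : ∀ i : Fin r, ∀ h : i.val + 1 < r, n i ∣ n ⟨i.val + 1, h⟩)
    (Dstar : ℕ) (hDstar : Dstar = 1 + ∑ i, (n i - 1))
    (expG : ℕ) (hexp : expG = n ⟨r - 1, by omega⟩)
    (m : ℕ) (hm1 : expG ≤ m) (hm2 : m ≤ 2 * expG - 1) :
    ∃ S : Multiset (∀ i : Fin r, ZMod (n i)),
      Multiset.card S = 2 * Dstar - m - 1 ∧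
      ∀ T ≤ S, T ≠ 0 → T.sum = 0 → ¬ Multiset.card T ≤ m := by
  set L : Fin r := ⟨r - 1, by omega⟩ with hL
  have hexpL : expG = n L := hexp
  by_cases hz : n L = 0
  · -- degenerate case: exponent 0, forces m = 0
    have hm0 : m = 0 := by
      rw [hexpL, hz] at hm2
      omega
    refine ⟨Multiset.replicate (2 * Dstar - m - 1) 0, by simp, ?_⟩
    intro T _ hT0 _ hcard
    rw [hm0, Nat.le_zero, Multiset.card_eq_zero] at hcard
    exact hT0 hcard
  -- main case: all n i ≥ 2
  have hchainL : ∀ d j (h : j < r), j + d = r - 1 → n ⟨j, h⟩ ∣ n L := by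
    intro d
    induction d with
    | zero =>
      intro j h hj
      have hj' : j = r - 1 := by omega
      subst hj'
      exact dvd_refl _
    | succ d ih =>
      intro j h hj
      exact (hdvd ⟨j, h⟩ (show j + 1 < r by omega)).trans (ih (j + 1) (by omega) (by omega))
  have hchain0 : ∀ j (h : j < r), n ⟨0, by omega⟩ ∣ n ⟨j, h⟩ := by
    intro j
    induction j with
    | zero => intro h; exact dvd_refl _
    | succ j ih =>
      intro h
      exact (ih (by omega)).trans (hdvd ⟨j, by omega⟩ h)
  have hn : ∀ i : Fin r, 2 ≤ n i := by
    rintro ⟨iv, hiv⟩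
    have h0 : n ⟨0, by omega⟩ ∣ n ⟨iv, hiv⟩ := hchain0 iv hiv
    have hLdvd : n ⟨iv, hiv⟩ ∣ n L := hchainL (r - 1 - iv) iv hiv (by omega)
    have hne : n ⟨iv, hiv⟩ ≠ 0 := by
      intro h
      rw [h] at hLdvd
      exact hz (zero_dvd_iff.mp hLdvd)
    have := Nat.le_of_dvd (Nat.pos_of_ne_zero hne) h0
    omega
  obtain ⟨S, hcard, hprop⟩ := Stmt12Aux.main r n hn L m (2 * n L - m - 1)
    (by rw [hexpL] at hm1 hm2; have := hn L; omega)
  refine ⟨S, ?_, hprop⟩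
  rw [hcard]
  have hsplit : ∑ i ∈ Finset.univ.erase L, (n i - 1) + (n L - 1) = ∑ i, (n i - 1) :=
    Finset.sum_erase_add _ _ (Finset.mem_univ L)
  have h2sum : ∑ i ∈ Finset.univ.erase L, 2 * (n i - 1)
      = 2 * ∑ i ∈ Finset.univ.erase L, (n i - 1) := by
    rw [Finset.mul_sum]
  rw [h2sum]
  rw [hexpL] at hm1 hm2
  have := hn L
  omega
end

section
/- Let n, r ≥ 2 be integers, G = C_n^r, and k ∈ [0, n-1]. Then s_{≤ 2n-1-k}(G) ≥ 2^{r-1}(n-1) + 1 + k; that is, there exists a sequence over C_n^r of length 2^{r-1}(n-1) + k all of whose nonempty zero-sum subsequences have length at least 2n - k. -/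
open Finset

private lemma sum_split {m : ℕ} (f : (Fin (m+1) → Bool) → ℕ) :
    ∑ ε : Fin (m+1) → Bool, f ε
      = ∑ δ : Fin m → Bool, (f (Fin.cons false δ) + f (Fin.cons true δ)) := by
  rw [← (Fin.consEquiv (fun _ : Fin (m+1) => Bool)).sum_comp f, Fintype.sum_prod_type,
    Fintype.sum_bool, Finset.sum_add_distrib]
  simp [Fin.consEquiv, add_comm]

private lemma sum_mod_if {ι : Type*} [Fintype ι] (n : ℕ) (P : ι → Prop) [DecidablePred P]
    (f : ι → ℕ) :
    ∑ i, (if P i then f i else 0)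
      = ∑ i, (if P i then f i % n else 0) + n * ∑ i, (if P i then f i / n else 0) := by
  rw [Finset.mul_sum, ← Finset.sum_add_distrib]
  refine Finset.sum_congr rfl fun i _ => ?_
  by_cases h : P i
  · simp only [if_pos h]
    exact (Nat.mod_add_div _ _).symm
  · simp [h]

private lemma sum_mod_decomp {ι : Type*} [Fintype ι] (n : ℕ) (f : ι → ℕ) :
    ∑ i, f i = ∑ i, f i % n + n * ∑ i, f i / n := by
  rw [Finset.mul_sum, ← Finset.sum_add_distrib]
  exact Finset.sum_congr rfl fun i _ => (Nat.mod_add_div _ _).symm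

private lemma dvd_shift {n Y Q : ℕ} (h : n ∣ Y + n * Q) : n ∣ Y := by
  have h2 := Nat.dvd_sub h (dvd_mul_right n Q)
  simpa using h2

private lemma eq_zero_or_n {n x : ℕ} (hn : 0 < n) (hd : n ∣ x) (hx : x < 2 * n) :
    x = 0 ∨ x = n := by
  obtain ⟨q, rfl⟩ := hd
  have hq : q < 2 := by
    by_contra hq
    push_neg at hq
    have : n * 2 ≤ n * q := Nat.mul_le_mul_left n hq
    omega
  interval_cases q <;> omega

private lemma key (n k : ℕ) (hn : 2 ≤ n) (hk : k ≤ n - 1) :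
    ∀ m : ℕ, ∀ a : ℕ, ∀ c : (Fin (m+1) → Bool) → ℕ,
      a ≤ k → (∀ ε, c ε ≤ n - 1) →
      n ∣ 2 * a + ∑ ε, c ε →
      n ∣ a + ∑ ε, (if ε (Fin.last m) then c ε else 0) →
      (∀ j : Fin (m+1), j ≠ Fin.last m → n ∣ ∑ ε, (if ε j then c ε else 0)) →
      0 < a + ∑ ε, c ε →
      2 * n - k ≤ a + ∑ ε, c ε := by
  have hn0 : 0 < n := by omega
  intro m
  induction m with
  | zero =>
    intro a c ha hc h1 h2 _ hpos
    have hcons : ∀ (b : Bool) (x : Fin 0 → Bool),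
        Fin.cons b x = (fun _ => b : Fin (0+1) → Bool) := by
      intro b x
      funext i
      refine Fin.cases ?_ (fun j => j.elim0) i
      simp
    have hsum : ∀ f : (Fin (0+1) → Bool) → ℕ,
        ∑ ε, f ε = f (fun _ => false) + f (fun _ => true) := by
      intro f
      rw [sum_split f, Fintype.sum_subsingleton _ (fun i : Fin 0 => i.elim0), hcons, hcons]
    rw [hsum] at h1 h2 hpos ⊢
    norm_num at h2
    have h3 : n ∣ a + c (fun _ => false) := by
      have hd := Nat.dvd_sub h1 h2
      have he : 2 * a + (c (fun _ => false) + c (fun _ => true)) - (a + c (fun _ => true))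
          = a + c (fun _ => false) := by omega
      rwa [he] at hd
    have hcfb := hc (fun _ => false)
    have hctb := hc (fun _ => true)
    have e1 := eq_zero_or_n hn0 h3 (by omega)
    have e2 := eq_zero_or_n hn0 h2 (by omega)
    rcases e1 with e1 | e1 <;> rcases e2 with e2 | e2 <;> omega
  | succ m ih =>
    intro a c ha hc h1 h2 h3 hpos
    obtain ⟨c', hcdef⟩ : ∃ f : (Fin (m+1) → Bool) → ℕ,
        f = fun δ => (c (Fin.cons false δ) + c (Fin.cons true δ)) % n := ⟨_, rfl⟩
    have hc'val : ∀ δ, c' δ = (c (Fin.cons false δ) + c (Fin.cons true δ)) % n := by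
      intro δ; rw [hcdef]
    have hsplitc : ∑ ε, c ε = ∑ δ, (c (Fin.cons false δ) + c (Fin.cons true δ)) := sum_split c
    have hc'le : ∑ δ, c' δ ≤ ∑ ε, c ε := by
      rw [hsplitc]
      exact Finset.sum_le_sum fun δ _ => by rw [hc'val]; exact Nat.mod_le _ _
    have hlast_ne : (0 : Fin (m+2)) ≠ Fin.last (m+1) := by
      intro h
      have := congrArg Fin.val h
      simp [Fin.last] at this
    have hA : n ∣ ∑ δ, c (Fin.cons true δ) := by
      have h0 := h3 0 hlast_ne
      rw [sum_split (fun ε => if ε 0 then c ε else 0)] at h0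
      simpa [Fin.cons_zero] using h0
    have hc'b : ∀ δ, c' δ ≤ n - 1 := by
      intro δ
      rw [hc'val]
      exact Nat.le_pred_of_lt (Nat.mod_lt _ hn0)
    have h1' : n ∣ 2 * a + ∑ δ, c' δ := by
      rw [hsplitc, sum_mod_decomp n] at h1
      have heq : 2 * a + (∑ δ, (c (Fin.cons false δ) + c (Fin.cons true δ)) % n
            + n * ∑ δ, (c (Fin.cons false δ) + c (Fin.cons true δ)) / n)
          = (2 * a + ∑ δ, c' δ) + n * ∑ δ, (c (Fin.cons false δ) + c (Fin.cons true δ)) / n := by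
        have h5 : ∑ δ, c' δ = ∑ δ, (c (Fin.cons false δ) + c (Fin.cons true δ)) % n :=
          Finset.sum_congr rfl fun δ _ => hc'val δ
        rw [h5]; ring
      rw [heq] at h1
      exact dvd_shift h1
    have hcomb : ∀ j : Fin (m+1),
        ∑ δ, ((if δ j then c (Fin.cons false δ) else 0) +
          (if δ j then c (Fin.cons true δ) else 0))
        = ∑ δ, (if δ j then c' δ else 0) +
          n * ∑ δ, (if δ j then (c (Fin.cons false δ) + c (Fin.cons true δ)) / n else 0) := by
      intro j
      have h0 : ∑ δ, ((if δ j then c (Fin.cons false δ) else 0) +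
            (if δ j then c (Fin.cons true δ) else 0))
          = ∑ δ, (if δ j then c (Fin.cons false δ) + c (Fin.cons true δ) else 0) := by
        refine Finset.sum_congr rfl fun δ _ => ?_
        by_cases h : δ j = true <;> simp [h]
      rw [h0, sum_mod_if n]
      congr 1
      refine Finset.sum_congr rfl fun δ _ => ?_
      rw [hc'val]
    have h2' : n ∣ a + ∑ δ, (if δ (Fin.last m) then c' δ else 0) := by
      rw [sum_split (fun ε => if ε (Fin.last (m+1)) then c ε else 0)] at h2
      have hls : Fin.last (m + 1) = Fin.succ (Fin.last m) := rfl
      simp only [hls, Fin.cons_succ] at h2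
      rw [hcomb (Fin.last m), ← add_assoc] at h2
      exact dvd_shift h2
    have h3' : ∀ j : Fin (m+1), j ≠ Fin.last m →
        n ∣ ∑ δ, (if δ j then c' δ else 0) := by
      intro j hj
      have hjs : Fin.succ j ≠ Fin.last (m+1) := by
        intro h
        apply hj
        have hls : Fin.last (m + 1) = Fin.succ (Fin.last m) := rfl
        rw [hls] at h
        exact Fin.succ_injective _ h
      have h0 := h3 (Fin.succ j) hjs
      rw [sum_split (fun ε => if ε (Fin.succ j) then c ε else 0)] at h0
      simp only [Fin.cons_succ] at h0
      rw [hcomb j] at h0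
      exact dvd_shift h0
    clear h2
    by_cases hpos' : 0 < a + ∑ δ, c' δ
    · exact (ih a c' ha hc'b h1' h2' h3' hpos').trans (Nat.add_le_add_left hc'le a)
    · clear h2'
      push_neg at hpos'
      have hsum0 : a + ∑ δ, c' δ = 0 := Nat.le_zero.mp hpos'
      have ha0 : a = 0 := by omega
      have hz : ∀ δ, c' δ = 0 := by
        intro δ
        have h0 : ∑ δ, c' δ = 0 := by omega
        exact (Finset.sum_eq_zero_iff.mp h0) δ (mem_univ δ)
      have hdvd2 : ∀ δ, c (Fin.cons false δ) + c (Fin.cons true δ) = 0 ∨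
          c (Fin.cons false δ) + c (Fin.cons true δ) = n := by
        intro δ
        have hd : n ∣ c (Fin.cons false δ) + c (Fin.cons true δ) := by
          apply Nat.dvd_of_mod_eq_zero
          have := hz δ
          rwa [hc'val] at this
        have hb1 := hc (Fin.cons false δ)
        have hb2 := hc (Fin.cons true δ)
        exact eq_zero_or_n hn0 hd (by omega)
      have hTpos : 0 < ∑ δ, (c (Fin.cons false δ) + c (Fin.cons true δ)) := by
        rw [← hsplitc]; omega
      obtain ⟨δ₀, -, hδ₀⟩ := Finset.exists_ne_zero_of_sum_ne_zero (show
          ∑ δ, (c (Fin.cons false δ) + c (Fin.cons true δ)) ≠ 0 by omega)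
      have hδ₀n : c (Fin.cons false δ₀) + c (Fin.cons true δ₀) = n := by
        rcases hdvd2 δ₀ with h | h
        · exact absurd h hδ₀
        · exact h
      by_cases htwo : ∃ δ₁, δ₁ ≠ δ₀ ∧ c (Fin.cons false δ₁) + c (Fin.cons true δ₁) ≠ 0
      · obtain ⟨δ₁, hne, hδ₁⟩ := htwo
        have hδ₁n : c (Fin.cons false δ₁) + c (Fin.cons true δ₁) = n := by
          rcases hdvd2 δ₁ with h | h
          · exact absurd h hδ₁
          · exact h
        have hge : (c (Fin.cons false δ₀) + c (Fin.cons true δ₀)) +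
            (c (Fin.cons false δ₁) + c (Fin.cons true δ₁))
            ≤ ∑ δ, (c (Fin.cons false δ) + c (Fin.cons true δ)) := by
          have hs := Finset.sum_le_sum_of_subset_of_nonneg
            (subset_univ ({δ₀, δ₁} : Finset _))
            (fun i _ _ => Nat.zero_le (c (Fin.cons false i) + c (Fin.cons true i)))
          rwa [Finset.sum_pair hne.symm] at hs
        rw [← hsplitc] at hge
        omega
      · push_neg at htwo
        have hzero : ∀ δ, δ ≠ δ₀ → c (Fin.cons true δ) = 0 := by
          intro δ hδ
          have := htwo δ hδ
          omega
        have hAval : ∑ δ, c (Fin.cons true δ) = c (Fin.cons true δ₀) := by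
          apply Finset.sum_eq_single δ₀
          · intro δ _ hδ; exact hzero δ hδ
          · intro h; exact absurd (mem_univ δ₀) h
        rw [hAval] at hA
        have hc1b := hc (Fin.cons true δ₀)
        have hc10 : c (Fin.cons true δ₀) = 0 := by
          rcases Nat.eq_zero_or_pos (c (Fin.cons true δ₀)) with h | h
          · exact h
          · exact absurd (Nat.le_of_dvd h hA) (by omega)
        have hc0b := hc (Fin.cons false δ₀)
        omega


private def gg0 (n m : ℕ) : Fin (m+2) → ZMod n :=
  Fin.cons 2 (fun j : Fin (m+1) => if j = Fin.last m then 1 else 0)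

private def gg (n m : ℕ) (ε : Fin (m+1) → Bool) : Fin (m+2) → ZMod n :=
  Fin.cons 1 (fun j : Fin (m+1) => if ε j then 1 else 0)

private lemma gg0_zero (n m : ℕ) : gg0 n m 0 = 2 := by simp [gg0]
private lemma gg_zero (n m : ℕ) (ε : Fin (m+1) → Bool) : gg n m ε 0 = 1 := by simp [gg]
private lemma gg0_succ (n m : ℕ) (j : Fin (m+1)) :
    gg0 n m (Fin.succ j) = if j = Fin.last m then 1 else 0 := by simp [gg0]
private lemma gg_succ (n m : ℕ) (ε : Fin (m+1) → Bool) (j : Fin (m+1)) :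
    gg n m ε (Fin.succ j) = if ε j then 1 else 0 := by simp [gg]

private lemma card_finsum {ι β : Type*} (s : Finset ι) (f : ι → Multiset β) :
    Multiset.card (∑ i ∈ s, f i) = ∑ i ∈ s, Multiset.card (f i) := by
  classical
  induction s using Finset.induction_on with
  | empty => simp
  | insert _ _ h ih => simp [Finset.sum_insert h, ih]

private lemma msum_finsum {ι β : Type*} [AddCommMonoid β] (s : Finset ι) (f : ι → Multiset β) :
    (∑ i ∈ s, f i).sum = ∑ i ∈ s, (f i).sum := by
  classical
  induction s using Finset.induction_on with
  | empty => simp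
  | insert _ _ h ih => simp [Finset.sum_insert h, ih]

theorem stmt_13 (n r : ℕ) (hn : 2 ≤ n) (hr : 2 ≤ r) (k : ℕ) (hk : k ≤ n - 1) :
    ∃ S : Multiset (Fin r → ZMod n),
      Multiset.card S = 2 ^ (r - 1) * (n - 1) + k ∧
      ∀ T ≤ S, T ≠ 0 → T.sum = 0 → 2 * n - k ≤ Multiset.card T := by
  obtain ⟨m, rfl⟩ : ∃ m, r = m + 2 := ⟨r - 2, by omega⟩
  haveI : NeZero n := ⟨by omega⟩
  have hone : (1 : ZMod n) ≠ 0 := by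
    haveI : Fact (1 < n) := ⟨by omega⟩
    exact one_ne_zero
  have hg0ne : ∀ ε, gg0 n m ≠ gg n m ε := by
    intro ε h
    have h0 := congrFun h 0
    rw [gg0_zero, gg_zero] at h0
    have : (1 : ZMod n) = 0 := by linear_combination h0
    exact hone this
  have ginj : Function.Injective (gg n m) := by
    intro ε ε' h
    funext j
    have hj := congrFun h (Fin.succ j)
    rw [gg_succ, gg_succ] at hj
    cases hε : ε j <;> cases hε' : ε' j <;> rw [hε, hε'] at hj <;> simp at hj ⊢
    · exact absurd hj.symm hone
    · exact absurd hj hone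
  obtain ⟨S, hSdef⟩ : ∃ S : Multiset (Fin (m+2) → ZMod n),
      S = Multiset.replicate k (gg0 n m) +
        ∑ ε : Fin (m+1) → Bool, Multiset.replicate (n-1) (gg n m ε) := ⟨_, rfl⟩
  have hcount0 : S.count (gg0 n m) = k := by
    rw [hSdef, Multiset.count_add, Multiset.count_replicate, if_pos rfl, Multiset.count_sum',
      Finset.sum_eq_zero, add_zero]
    intro ε _
    rw [Multiset.count_replicate, if_neg (fun h => hg0ne ε h.symm)]
  have hcountg : ∀ ε, S.count (gg n m ε) = n - 1 := by
    intro ε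
    rw [hSdef, Multiset.count_add, Multiset.count_replicate,
      if_neg (hg0ne ε), Multiset.count_sum',
      Finset.sum_eq_single_of_mem ε (mem_univ ε)
        (fun ε' _ hne => by
          rw [Multiset.count_replicate, if_neg]
          intro h
          exact hne (ginj h)),
      Multiset.count_replicate, if_pos rfl, zero_add]
  refine ⟨S, ?_, ?_⟩
  · rw [hSdef, Multiset.card_add, Multiset.card_replicate, card_finsum]
    simp only [Multiset.card_replicate, Finset.sum_const, Finset.card_univ, smul_eq_mul]
    have hcard2 : Fintype.card (Fin (m+1) → Bool) = 2 ^ (m+1) := by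
      simp [Fintype.card_fun]
    have hr1 : m + 2 - 1 = m + 1 := by omega
    rw [hcard2, hr1, Nat.add_comm]
  · intro T hTS hT0 hTsum
    have ha : T.count (gg0 n m) ≤ k := hcount0 ▸ Multiset.count_le_of_le _ hTS
    have hc : ∀ ε, T.count (gg n m ε) ≤ n - 1 := fun ε =>
      (hcountg ε) ▸ Multiset.count_le_of_le _ hTS
    have hmem : ∀ x ∈ T, x = gg0 n m ∨ ∃ ε, x = gg n m ε := by
      intro x hx
      have hxS : x ∈ S := Multiset.mem_of_le hTS hx
      rw [hSdef, Multiset.mem_add] at hxS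
      rcases hxS with h | h
      · exact Or.inl (Multiset.eq_of_mem_replicate h)
      · rw [Multiset.mem_sum] at h
        obtain ⟨ε, -, hε⟩ := h
        exact Or.inr ⟨ε, Multiset.eq_of_mem_replicate hε⟩
    have hTeq : T = Multiset.replicate (T.count (gg0 n m)) (gg0 n m) +
        ∑ ε, Multiset.replicate (T.count (gg n m ε)) (gg n m ε) := by
      ext x
      rw [Multiset.count_add, Multiset.count_replicate, Multiset.count_sum']
      by_cases hx0 : gg0 n m = x
      · subst hx0
        rw [if_pos rfl, Finset.sum_eq_zero, add_zero]
        intro ε _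
        rw [Multiset.count_replicate, if_neg (fun h => hg0ne ε h.symm)]
      · rw [if_neg hx0, zero_add]
        by_cases hxg : ∃ ε, x = gg n m ε
        · obtain ⟨ε₀, rfl⟩ := hxg
          rw [Finset.sum_eq_single_of_mem ε₀ (mem_univ ε₀)
            (fun ε _ hne => by
              rw [Multiset.count_replicate, if_neg]
              intro h
              exact hne (ginj h)),
            Multiset.count_replicate, if_pos rfl]
        · have hxT : x ∉ T := fun hx => by
            rcases hmem x hx with h | h
            · exact hx0 h.symm
            · exact hxg h
          rw [Multiset.count_eq_zero_of_notMem hxT, Finset.sum_eq_zero]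
          intro ε _
          rw [Multiset.count_replicate, if_neg (fun h => hxg ⟨ε, h.symm⟩)]
    have hcard : Multiset.card T = T.count (gg0 n m) + ∑ ε, T.count (gg n m ε) := by
      conv_lhs => rw [hTeq]
      rw [Multiset.card_add, Multiset.card_replicate, card_finsum]
      simp only [Multiset.card_replicate]
    have hpos : 0 < T.count (gg0 n m) + ∑ ε, T.count (gg n m ε) := by
      rw [← hcard]
      exact Multiset.card_pos.mpr hT0
    have hS0 : (T.count (gg0 n m)) • gg0 n m +
        ∑ ε, (T.count (gg n m ε)) • gg n m ε = 0 := by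
      rw [← hTsum]
      conv_rhs => rw [hTeq]
      rw [Multiset.sum_add, msum_finsum]
      congr 1
      · rw [Multiset.sum_replicate]
      · exact Finset.sum_congr rfl fun ε _ => (Multiset.sum_replicate _ _).symm
    have h1 : n ∣ 2 * T.count (gg0 n m) + ∑ ε, T.count (gg n m ε) := by
      have h := congrFun hS0 0
      simp only [Pi.add_apply, Pi.smul_apply, Finset.sum_apply, Pi.zero_apply,
        gg0_zero, gg_zero] at h
      rw [← ZMod.natCast_eq_zero_iff]
      have hcast : ((2 * T.count (gg0 n m) + ∑ ε, T.count (gg n m ε) : ℕ) : ZMod n)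
          = T.count (gg0 n m) • (2 : ZMod n) + ∑ ε, T.count (gg n m ε) • (1 : ZMod n) := by
        push_cast [nsmul_eq_mul]
        ring
      rw [hcast]
      exact h
    have hsucc : ∀ j : Fin (m+1),
        n ∣ (if j = Fin.last m then T.count (gg0 n m) else 0) +
          ∑ ε, (if ε j then T.count (gg n m ε) else 0) := by
      intro j
      have h := congrFun hS0 (Fin.succ j)
      simp only [Pi.add_apply, Pi.smul_apply, Finset.sum_apply, Pi.zero_apply,
        gg0_succ, gg_succ] at h
      rw [← ZMod.natCast_eq_zero_iff]
      have hcast : (((if j = Fin.last m then T.count (gg0 n m) else 0) +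
          ∑ ε, (if ε j then T.count (gg n m ε) else 0) : ℕ) : ZMod n)
          = T.count (gg0 n m) • (if j = Fin.last m then (1:ZMod n) else 0) +
            ∑ ε, T.count (gg n m ε) • (if ε j then (1:ZMod n) else 0) := by
        push_cast [nsmul_eq_mul]
        simp only [mul_ite, ite_mul, mul_one, mul_zero, zero_mul, one_mul]
      rw [hcast]
      exact h
    have h2 : n ∣ T.count (gg0 n m) +
        ∑ ε, (if ε (Fin.last m) then T.count (gg n m ε) else 0) := by
      have h := hsucc (Fin.last m)
      rwa [if_pos rfl] at h
    have h3 : ∀ j : Fin (m+1), j ≠ Fin.last m →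
        n ∣ ∑ ε, (if ε j then T.count (gg n m ε) else 0) := by
      intro j hj
      have h := hsucc j
      rwa [if_neg hj, zero_add] at h
    rw [hcard]
    exact key n k hn hk m _ _ ha hc h1 h2 h3 hpos
end

section
/- Let p be a prime, G a finite abelian p-group, and k ∈ [exp(G)+1, D(G)] an integer. Let S be a sequence over G of length 2·D(G) - k + 1 such that S has no zero-sum subsequence of length i for any i ∈ [D(G)+1, |S|]. If the binomial coefficient C(D(G), k-1) is not divisible by p, then S has a nonempty zero-sum subsequence of length at most k - 1. -/
lemma ringChoose_negNat (m j : ℕ) (hm : 1 ≤ m) :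
    Ring.choose (-(m:ℤ)) j = (-1)^j * ((m + j - 1).choose j : ℤ) := by
  rcases Nat.eq_zero_or_pos (m + j - 1) with hs | hs
  · have hm1 : m = 1 := by omega
    have hj0 : j = 0 := by omega
    subst hm1 hj0
    simp [Ring.choose_zero_right]
  · obtain ⟨s, hs'⟩ : ∃ s, m + j - 1 = s + 1 := ⟨m + j - 2, by omega⟩
    have key : (-(m:ℤ)) - j + 1 = Int.negSucc s := by
      rw [Int.negSucc_eq]
      omega
    rw [Ring.choose, key]
    show Int.multichoose (Int.negSucc s) j = _
    rw [Int.multichoose]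
    rw [hs']
    rw [Int.coe_negOnePow_natCast]

lemma vand (m y : ℕ) (hmy : m ≤ y) :
    ((y - m).choose m : ℤ) =
      ∑ j ∈ Finset.range (m+1),
        ((-1)^(m-j) * ((m + (m - j) - 1).choose (m - j) : ℤ)) * (y.choose j : ℤ) := by
  rcases Nat.eq_zero_or_pos m with hm | hm
  · subst hm; simp
  · have h1 : ((y - m : ℕ) : ℤ) = (y:ℤ) + (-(m:ℤ)) := by omega
    have h2 : ((y - m).choose m : ℤ) = Ring.choose (((y - m : ℕ)) : ℤ) m :=
      (Ring.choose_natCast (R := ℤ) _ m).symm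
    rw [h2, h1, Ring.add_choose_eq m (Commute.all _ _),
      Finset.Nat.sum_antidiagonal_eq_sum_range_succ
        (f := fun i j => Ring.choose (y:ℤ) i * Ring.choose (-(m:ℤ)) j)]
    refine Finset.sum_congr rfl fun j hj => ?_
    rw [Ring.choose_natCast, ringChoose_negNat m (m - j) hm]
    ring


open Finset in
lemma olson (p : ℕ) (hp : p.Prime) (G : Type*) [AddCommGroup G] [Fintype G] [DecidableEq G]
    (hpG : ∀ g : G, ∃ n : ℕ, p ^ n • g = 0) (D : ℕ)
    (hD1 : ∀ S : Multiset G, D ≤ Multiset.card S → ∃ T ≤ S, T ≠ 0 ∧ T.sum = 0)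
    {N : ℕ} (f : Fin N → G) (s : Finset (Fin N)) (hs : D ≤ s.card) :
    ∑ t ∈ s.powerset, (if (∑ j ∈ t, f j) = 0 then ((-1 : ZMod p)^t.card) else 0) = 0 := by
  classical
  haveI : Fact p.Prime := ⟨hp⟩
  obtain ⟨ι, hι, n, h1n, ⟨e0⟩⟩ := AddCommGroup.equiv_directSum_zmod_of_finite' G
  haveI : ∀ i, NeZero (n i) := fun i => ⟨by have := h1n i; omega⟩
  let e : G ≃+ (∀ i, ZMod (n i)) := e0.trans (DirectSum.addEquivProd _)
  let γ : ι → G := fun i => e.symm (Pi.single i 1)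
  -- γ is injective
  have hγinj : Function.Injective γ := by
    intro i j hij
    by_contra hne
    have h2 : (Pi.single i (1 : ZMod (n i)) : ∀ i', ZMod (n i')) = Pi.single j 1 :=
      e.symm.injective hij
    have h3 := congrFun h2 i
    rw [Pi.single_eq_same, Pi.single_eq_of_ne hne] at h3
    haveI : Nontrivial (ZMod (n i)) := by
      haveI : Fact (1 < n i) := ⟨h1n i⟩
      infer_instance
    exact one_ne_zero h3
  -- each n i • γ i = 0
  have hγord : ∀ i, (n i) • γ i = 0 := by
    intro i
    show (n i) • e.symm (Pi.single i 1) = 0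
    rw [← map_nsmul, ← Pi.single_smul, nsmul_eq_mul, mul_one, ZMod.natCast_self,
      Pi.single_zero, map_zero]
  -- n i is a power of p
  have hnpow : ∀ i, ∃ c : ℕ, n i = p ^ c := by
    intro i
    obtain ⟨t, ht⟩ := hpG (γ i)
    have h2 : p ^ t • (Pi.single i (1 : ZMod (n i)) : ∀ i', ZMod (n i')) = 0 := by
      have := congrArg e ht
      rw [map_nsmul, map_zero] at this
      rwa [show e (γ i) = Pi.single i 1 from e.apply_symm_apply _] at this
    have h3 := congrFun h2 i
    rw [Pi.smul_apply, Pi.single_eq_same, nsmul_eq_mul, mul_one] at h3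
    have h4 : (n i) ∣ p ^ t := by
      have : ((p ^ t : ℕ) : ZMod (n i)) = 0 := by exact_mod_cast h3
      exact (ZMod.natCast_eq_zero_iff _ _).mp this
    obtain ⟨c, _, hc⟩ := (Nat.dvd_prime_pow hp).mp h4
    exact ⟨c, hc⟩
  -- closure of range γ is everything
  have htop : ∀ g : G, g ∈ AddSubgroup.closure (Set.range γ) := by
    intro g
    have hg : g = e.symm (e g) := (e.symm_apply_apply g).symm
    rw [hg]
    have hx : (e g : ∀ i, ZMod (n i)) = ∑ i, Pi.single i (e g i) :=
      (Finset.univ_sum_single (e g)).symm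
    rw [hx, map_sum]
    refine AddSubgroup.sum_mem _ fun i _ => ?_
    have hone : (Pi.single i (e g i) : ∀ i', ZMod (n i'))
        = (e g i).val • Pi.single i (1 : ZMod (n i)) := by
      rw [← Pi.single_smul, nsmul_eq_mul, mul_one, ZMod.natCast_val, ZMod.cast_id]
    rw [hone, map_nsmul]
    exact AddSubgroup.nsmul_mem _ (AddSubgroup.subset_closure (Set.mem_range_self i)) _
  -- the group algebra
  haveI : CharP (AddMonoidAlgebra (ZMod p) G) p := by
    apply charP_of_injective_ringHom (R := ZMod p)
      (f := AddMonoidAlgebra.singleZeroRingHom)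
    intro a b hab
    exact AddMonoidAlgebra.single_right_injective (m := (0 : G)) hab
  let X : G → AddMonoidAlgebra (ZMod p) G := fun g => AddMonoidAlgebra.single g 1
  have hXmul : ∀ g h : G, X g * X h = X (g + h) := by
    intro g h
    show AddMonoidAlgebra.single g 1 * AddMonoidAlgebra.single h 1 = _
    rw [AddMonoidAlgebra.single_mul_single, mul_one]
  have hX0 : X 0 = 1 := rfl
  -- nilpotency of generators
  have hXnil : ∀ i, (1 - X (γ i)) ^ (n i) = 0 := by
    intro i
    obtain ⟨c, hc⟩ := hnpow i
    rw [hc, sub_pow_char_pow, one_pow, ← hc]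
    have hXp : (X (γ i)) ^ (n i) = X ((n i) • γ i) := by
      show (AddMonoidAlgebra.single (γ i) 1) ^ (n i) = _
      rw [AddMonoidAlgebra.single_pow, one_pow]
    rw [hXp, hγord i, hX0, sub_self]
  -- the ideal
  let I : Ideal (AddMonoidAlgebra (ZMod p) G) := Ideal.span (Set.range fun i => 1 - X (γ i))
  have hmemI : ∀ g : G, (1 - X g) ∈ I := by
    let K : AddSubgroup G :=
      { carrier := {g | 1 - X g ∈ I}
        zero_mem' := by
          show 1 - X 0 ∈ I
          rw [hX0, sub_self]; exact zero_mem I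
        add_mem' := by
          intro a b ha hb
          show 1 - X (a + b) ∈ I
          have key : 1 - X (a + b) = (1 - X a) + X a * (1 - X b) := by
            rw [mul_sub, mul_one, hXmul]; ring
          rw [key]
          exact add_mem ha (Ideal.mul_mem_left _ _ hb)
        neg_mem' := by
          intro a ha
          show 1 - X (-a) ∈ I
          have key : 1 - X (-a) = (- X (-a)) * (1 - X a) := by
            rw [neg_mul, mul_sub, mul_one, hXmul, neg_add_cancel, hX0]; ring
          rw [key]
          exact Ideal.mul_mem_left _ _ ha }
    intro g
    have hle : AddSubgroup.closure (Set.range γ) ≤ K := by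
      apply (AddSubgroup.closure_le K).mpr
      rintro - ⟨i, rfl⟩
      exact Ideal.subset_span ⟨i, rfl⟩
    exact hle (htop g)
  -- counting in binds of replicates
  have hbindcount : ∀ (c : ι → ℕ) (a : G),
      Multiset.count a (Finset.univ.val.bind fun j => Multiset.replicate (c j) (γ j))
        = ∑ j, if γ j = a then c j else 0 := by
    intro c a
    rw [Multiset.count_bind]
    have h1 : Multiset.sum (Multiset.map (fun b => Multiset.count a
        (Multiset.replicate (c b) (γ b))) Finset.univ.val)
        = ∑ j, Multiset.count a (Multiset.replicate (c j) (γ j)) := rfl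
    rw [h1]
    exact Finset.sum_congr rfl fun j _ => by rw [Multiset.count_replicate]
  have hswitch : ∀ (c : ι → ℕ) (i : ι), (∑ j, if γ j = γ i then c j else 0) = c i := by
    intro c i
    have h1 : ∀ j : ι, (if γ j = γ i then c j else 0) = if j = i then c j else 0 := by
      intro j
      by_cases h : j = i
      · subst h; rw [if_pos rfl, if_pos rfl]
      · rw [if_neg h, if_neg (fun hh => h (hγinj hh))]
    rw [Finset.sum_congr rfl fun j _ => h1 j, Finset.sum_ite_eq' Finset.univ i c]
    simp
  -- the Davenport bound: ∑ (n i - 1) < D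
  have hdstar : ∑ i, (n i - 1) < D := by
    by_contra hcon
    push_neg at hcon
    set S0 : Multiset G := (Finset.univ.val).bind fun i => Multiset.replicate (n i - 1) (γ i)
      with hS0
    have hS0card : Multiset.card S0 = ∑ i, (n i - 1) := by
      rw [hS0, Multiset.card_bind]
      have h1 : Multiset.sum (Multiset.map (Multiset.card ∘ fun i =>
          Multiset.replicate (n i - 1) (γ i)) Finset.univ.val)
          = ∑ j, Multiset.card (Multiset.replicate (n j - 1) (γ j)) := rfl
      rw [h1]
      exact Finset.sum_congr rfl fun j _ => Multiset.card_replicate _ _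
    obtain ⟨T, hTS0, hTne, hTsum⟩ := hD1 S0 (by rw [hS0card]; exact hcon)
    -- T is a combination of replicates
    have hTeq : T = (Finset.univ.val).bind fun i => Multiset.replicate (T.count (γ i)) (γ i) := by
      ext a
      rw [hbindcount]
      by_cases ha : ∃ i, γ i = a
      · obtain ⟨i, rfl⟩ := ha
        rw [hswitch (fun j => T.count (γ j)) i]
      · have h1 : T.count a = 0 := by
          have h2 : T.count a ≤ S0.count a := Multiset.count_le_of_le a hTS0
          have h3 : S0.count a = 0 := by
            rw [hS0, hbindcount]
            apply Finset.sum_eq_zero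
            intro j _
            rw [if_neg (fun hh => ha ⟨j, hh⟩)]
          omega
        rw [h1]
        symm
        apply Finset.sum_eq_zero
        intro j _
        rw [if_neg (fun hh => ha ⟨j, hh⟩)]
    -- sum of T
    have hTsum' : T.sum = ∑ i, (T.count (γ i)) • γ i := by
      conv_lhs => rw [hTeq]
      rw [Multiset.sum_bind]
      have h1 : Multiset.sum (Multiset.map (fun i =>
          Multiset.sum (Multiset.replicate (T.count (γ i)) (γ i))) Finset.univ.val)
          = ∑ i, Multiset.sum (Multiset.replicate (T.count (γ i)) (γ i)) := rfl
      rw [h1]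
      exact Finset.sum_congr rfl fun j _ => Multiset.sum_replicate _ _
    -- each count vanishes
    have hcnt0 : ∀ i, T.count (γ i) = 0 := by
      intro i
      have h1 : (e (T.sum)) i = 0 := by rw [hTsum, map_zero]; rfl
      rw [hTsum', map_sum] at h1
      have h2 : ∀ j, e ((T.count (γ j)) • γ j)
          = (T.count (γ j)) • (Pi.single j (1 : ZMod (n j)) : ∀ i', ZMod (n i')) := by
        intro j
        rw [map_nsmul]
        congr 1
        exact e.apply_symm_apply _
      rw [Finset.sum_congr rfl fun j _ => h2 j] at h1
      rw [Finset.sum_apply] at h1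
      have h3 : ∀ j, ((T.count (γ j)) • (Pi.single j (1 : ZMod (n j)) : ∀ i', ZMod (n i'))) i
          = if j = i then ((T.count (γ i) : ZMod (n i))) else 0 := by
        intro j
        rw [Pi.smul_apply]
        by_cases h : j = i
        · subst h; rw [Pi.single_eq_same, if_pos rfl, nsmul_eq_mul, mul_one]
        · rw [Pi.single_eq_of_ne (fun hh : i = j => h hh.symm), if_neg h, smul_zero]
      rw [Finset.sum_congr rfl fun j _ => h3 j, Finset.sum_ite_eq'] at h1
      simp only [Finset.mem_univ, if_pos] at h1
      have h4 : n i ∣ T.count (γ i) := (ZMod.natCast_eq_zero_iff _ _).mp h1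
      have h5 : T.count (γ i) ≤ n i - 1 := by
        have := Multiset.count_le_of_le (γ i) hTS0
        rw [hS0, hbindcount] at this
        calc T.count (γ i) ≤ ∑ j, if γ j = γ i then n j - 1 else 0 := this
          _ = n i - 1 := hswitch (fun j => n j - 1) i
      have h6 : T.count (γ i) < n i := by have := h1n i; omega
      exact Nat.eq_zero_of_dvd_of_lt h4 h6
    apply hTne
    ext a
    rw [Multiset.count_zero, hTeq, hbindcount]
    apply Finset.sum_eq_zero
    intro j _
    rw [hcnt0 j]
    simp
  -- the product over s vanishes
  have hprod : ∏ j ∈ s, (1 - X (f j)) = 0 := by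
    have hrep : ∀ j : Fin N, ∃ c : ι → AddMonoidAlgebra (ZMod p) G,
        ∑ i, c i * (1 - X (γ i)) = 1 - X (f j) := fun j =>
      Ideal.mem_span_range_iff_exists_fun.mp (hmemI (f j))
    choose c hc using hrep
    rw [← Finset.prod_coe_sort s fun j => (1 - X (f j))]
    rw [Finset.prod_congr rfl fun (j : {x // x ∈ s}) _ => (hc j).symm]
    rw [Finset.prod_univ_sum]
    apply Finset.sum_eq_zero
    intro σ hσ
    rw [Finset.prod_mul_distrib]
    have h3 : ∏ j : {x // x ∈ s}, (1 - X (γ (σ j))) = 0 := by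
      rw [Finset.prod_comp (fun i => 1 - X (γ i)) (fun j => σ j)]
      obtain ⟨b, hb, hcard⟩ : ∃ b ∈ Finset.univ.image (fun j : {x // x ∈ s} => σ j),
          n b ≤ (Finset.univ.filter fun j : {x // x ∈ s} => σ j = b).card := by
        by_contra hcon2
        push_neg at hcon2
        have hsum := Finset.card_eq_sum_card_image (fun j : {x // x ∈ s} => σ j)
          (Finset.univ : Finset {x // x ∈ s})
        have hle : ∑ b ∈ Finset.univ.image (fun j : {x // x ∈ s} => σ j),
            (Finset.univ.filter fun j : {x // x ∈ s} => σ j = b).card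
            ≤ ∑ b ∈ Finset.univ.image (fun j : {x // x ∈ s} => σ j), (n b - 1) :=
          Finset.sum_le_sum fun b hb => by have := hcon2 b hb; omega
        have hle2 : ∑ b ∈ Finset.univ.image (fun j : {x // x ∈ s} => σ j), (n b - 1)
            ≤ ∑ b : ι, (n b - 1) :=
          Finset.sum_le_sum_of_subset (Finset.subset_univ _)
        have hcards : (Finset.univ : Finset {x // x ∈ s}).card = s.card := by
          rw [Finset.card_univ, Fintype.card_coe]
        omega
      refine Finset.prod_eq_zero hb ?_
      have hsplit : (1 - X (γ b)) ^ (Finset.univ.filter fun j : {x // x ∈ s} => σ j = b).card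
          = (1 - X (γ b)) ^ (n b) *
            (1 - X (γ b)) ^ ((Finset.univ.filter fun j : {x // x ∈ s} => σ j = b).card - n b) := by
        rw [← pow_add]
        congr 1
        omega
      rw [hsplit, hXnil b, zero_mul]
    rw [h3, mul_zero]
  -- expand the product
  have hexp : ∏ j ∈ s, (1 - X (f j))
      = ∑ t ∈ s.powerset, AddMonoidAlgebra.single (∑ j ∈ t, f j) ((-1 : ZMod p)^t.card) := by
    have h0 : ∀ j : Fin N, (1 : AddMonoidAlgebra (ZMod p) G) - X (f j)
        = AddMonoidAlgebra.single (f j) (-1) + 1 := by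
      intro j
      have : AddMonoidAlgebra.single (f j) (-1 : ZMod p) = -(X (f j)) :=
        AddMonoidAlgebra.single_neg _ _
      rw [this]
      ring
    rw [Finset.prod_congr rfl fun j _ => h0 j, Finset.prod_add]
    refine Finset.sum_congr rfl fun t ht => ?_
    rw [AddMonoidAlgebra.prod_single, Finset.prod_const, Finset.prod_const, one_pow, mul_one]
  have h4 : (∑ t ∈ s.powerset,
      AddMonoidAlgebra.single (∑ j ∈ t, f j) ((-1 : ZMod p)^t.card)).coeff 0 = 0 := by
    rw [← hexp, hprod]
    rfl
  rw [AddMonoidAlgebra.coeff_sum, Finset.sum_apply'] at h4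
  calc ∑ t ∈ s.powerset, (if (∑ j ∈ t, f j) = 0 then ((-1 : ZMod p)^t.card) else 0)
      = ∑ t ∈ s.powerset, (AddMonoidAlgebra.single (∑ j ∈ t, f j) ((-1 : ZMod p)^t.card)).coeff 0 :=
        Finset.sum_congr rfl fun t _ => by rw [AddMonoidAlgebra.coeff_single, Finsupp.single_apply]
    _ = 0 := h4


theorem stmt_16 (p : ℕ) (hp : p.Prime) (G : Type*) [AddCommGroup G] [Fintype G]
    (hpG : ∀ g : G, ∃ n : ℕ, p ^ n • g = 0)
    (D : ℕ)
    (hD : IsLeast {t : ℕ | ∀ S : Multiset G, t ≤ Multiset.card S →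
      ∃ T ≤ S, T ≠ 0 ∧ T.sum = 0} D)
    (k : ℕ) (hk1 : AddMonoid.exponent G + 1 ≤ k) (hk2 : k ≤ D)
    (S : Multiset G) (hScard : Multiset.card S = 2 * D - k + 1)
    (hno : ∀ T ≤ S, T.sum = 0 → ¬ (D + 1 ≤ Multiset.card T ∧ Multiset.card T ≤ Multiset.card S))
    (hbin : ¬ p ∣ D.choose (k - 1)) :
    ∃ T ≤ S, T ≠ 0 ∧ T.sum = 0 ∧ Multiset.card T ≤ k - 1 := by
  classical
  by_contra hcon
  push_neg at hcon
  haveI : Fact p.Prime := ⟨hp⟩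
  haveI : NeZero p := ⟨hp.ne_zero⟩
  have hk0 : 1 ≤ k := by
    have := AddMonoid.exponent G
    omega
  set m := D - k + 1 with hm
  set N := S.toList.length with hN
  have hNS : N = Multiset.card S := by rw [hN, Multiset.length_toList]
  have hNval : N = 2 * D - k + 1 := by rw [hNS, hScard]
  have hDN : D < N := by omega
  set f : Fin N → G := S.toList.get with hf
  have hSmap : S = Multiset.map f Finset.univ.val := by
    have h1 : (Finset.univ : Finset (Fin N)).val = ↑(List.finRange N) := by
      rfl
    rw [h1]
    have h2 : Multiset.map f ↑(List.finRange N) = ↑(List.map f (List.finRange N)) := rfl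
    rw [h2, ← List.ofFn_eq_map, hf, List.ofFn_get, Multiset.coe_toList]
  -- zero-sum index sets have size in {0} ∪ [k, D]
  have hzs : ∀ t : Finset (Fin N), (∑ j ∈ t, f j) = 0 → t ≠ ∅ →
      k ≤ t.card ∧ t.card ≤ D := by
    intro t hsum htne
    set T : Multiset G := Multiset.map f t.val with hT
    have hTle : T ≤ S := by
      rw [hSmap, hT]
      exact Multiset.map_le_map (Finset.val_le_iff.mpr (Finset.subset_univ t))
    have hTcard : Multiset.card T = t.card := by rw [hT, Multiset.card_map]; rfl
    have hTsum : T.sum = ∑ j ∈ t, f j := rfl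
    have hTne : T ≠ 0 := by
      intro h0
      apply htne
      have : t.card = 0 := by rw [← hTcard, h0]; rfl
      exact Finset.card_eq_zero.mp this
    constructor
    · by_contra hlt
      push_neg at hlt
      exact absurd (hcon T hTle hTne (by rw [hTsum]; exact hsum))
        (by push_neg; rw [hTcard]; omega)
    · have := hno T hTle (by rw [hTsum]; exact hsum)
      have hcs : Multiset.card T ≤ Multiset.card S := Multiset.card_le_card hTle
      rw [hTcard] at this hcs
      rw [← hNS] at hcs
      omega
  -- weighted counting
  have h5 : ∀ q : ℕ, q ≤ m →
      ∑ t ∈ (Finset.univ : Finset (Fin N)).powerset,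
        (if (∑ j ∈ t, f j) = 0 then
          ((-1 : ZMod p)^t.card) * ((N - t.card).choose q : ZMod p) else 0) = 0 := by
    intro q hq
    have key : ∀ U ∈ Finset.powersetCard q (Finset.univ : Finset (Fin N)),
        ∑ t ∈ (Finset.univ \ U).powerset,
          (if (∑ j ∈ t, f j) = 0 then ((-1 : ZMod p)^t.card) else 0) = 0 := by
      intro U hU
      apply olson p hp G hpG D hD.1 f
      have hUcard : U.card = q := (Finset.mem_powersetCard.mp hU).2
      rw [Finset.card_sdiff_of_subset (Finset.subset_univ U), Finset.card_univ, Fintype.card_fin, hUcard]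
      omega
    have hpair : ∀ (U t : Finset (Fin N)),
        U ∈ Finset.powersetCard q (Finset.univ : Finset (Fin N)) ∧
          t ∈ (Finset.univ \ U).powerset
        ↔ U ∈ Finset.powersetCard q (Finset.univ \ t) ∧
          t ∈ (Finset.univ : Finset (Fin N)).powerset := by
      intro U t
      simp only [Finset.mem_powersetCard, Finset.mem_powerset]
      constructor
      · rintro ⟨⟨_, hU2⟩, ht⟩
        refine ⟨⟨?_, hU2⟩, Finset.subset_univ t⟩
        intro x hx
        rw [Finset.mem_sdiff]
        exact ⟨Finset.mem_univ x, fun hxt => (Finset.mem_sdiff.mp (ht hxt)).2 hx⟩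
      · rintro ⟨⟨hU1, hU2⟩, _⟩
        refine ⟨⟨Finset.subset_univ U, hU2⟩, ?_⟩
        intro x hx
        rw [Finset.mem_sdiff]
        exact ⟨Finset.mem_univ x, fun hxU => (Finset.mem_sdiff.mp (hU1 hxU)).2 hx⟩
    calc ∑ t ∈ (Finset.univ : Finset (Fin N)).powerset,
          (if (∑ j ∈ t, f j) = 0 then
            ((-1 : ZMod p)^t.card) * ((N - t.card).choose q : ZMod p) else 0)
        = ∑ t ∈ (Finset.univ : Finset (Fin N)).powerset,
            ∑ _U ∈ Finset.powersetCard q (Finset.univ \ t),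
              (if (∑ j ∈ t, f j) = 0 then ((-1 : ZMod p)^t.card) else 0) := by
          refine Finset.sum_congr rfl fun t _ => ?_
          rw [Finset.sum_const, Finset.card_powersetCard,
            Finset.card_sdiff_of_subset (Finset.subset_univ t), Finset.card_univ, Fintype.card_fin]
          by_cases hz : (∑ j ∈ t, f j) = 0
          · rw [if_pos hz, if_pos hz, nsmul_eq_mul, mul_comm]
          · rw [if_neg hz, if_neg hz, smul_zero]
      _ = ∑ U ∈ Finset.powersetCard q (Finset.univ : Finset (Fin N)),
            ∑ t ∈ (Finset.univ \ U).powerset,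
              (if (∑ j ∈ t, f j) = 0 then ((-1 : ZMod p)^t.card) else 0) :=
          (Finset.sum_comm' hpair).symm
      _ = 0 := Finset.sum_eq_zero key
  -- combine with Vandermonde coefficients
  set c : ℕ → ℤ := fun j => (-1 : ℤ)^(m-j) * ((m + (m - j) - 1).choose (m - j) : ℤ) with hc
  have h7 : ∑ t ∈ (Finset.univ : Finset (Fin N)).powerset,
      ∑ j ∈ Finset.range (m+1), ((c j : ZMod p) *
        (if (∑ j' ∈ t, f j') = 0 then
          ((-1 : ZMod p)^t.card) * ((N - t.card).choose j : ZMod p) else 0)) = 0 := by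
    rw [Finset.sum_comm]
    apply Finset.sum_eq_zero
    intro j hj
    rw [← Finset.mul_sum, h5 j (by have := Finset.mem_range.mp hj; omega), mul_zero]
  have h8 : ∀ t ∈ (Finset.univ : Finset (Fin N)).powerset,
      (∑ j ∈ Finset.range (m+1), ((c j : ZMod p) *
        (if (∑ j' ∈ t, f j') = 0 then
          ((-1 : ZMod p)^t.card) * ((N - t.card).choose j : ZMod p) else 0)))
      = if t = ∅ then ((D.choose m : ZMod p)) else 0 := by
    intro t _
    by_cases hz : (∑ j' ∈ t, f j') = 0
    · have hcard_le_D : t.card ≤ D := by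
        by_cases hte : t = ∅
        · subst hte; simp
        · exact (hzs t hz hte).2
      have hv := vand m (N - t.card) (by omega)
      have hsub : N - t.card - m = D - t.card := by omega
      rw [hsub] at hv
      have hcast : ((D - t.card).choose m : ZMod p)
          = ∑ j ∈ Finset.range (m+1), (c j : ZMod p) * ((N - t.card).choose j : ZMod p) := by
        have h9 := congrArg (fun z : ℤ => (z : ZMod p)) hv
        push_cast at h9
        rw [h9]
        push_cast [hc]
        rfl
      have hsum' : ∑ j ∈ Finset.range (m+1), ((c j : ZMod p) *
          (if (∑ j' ∈ t, f j') = 0 then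
            ((-1 : ZMod p)^t.card) * ((N - t.card).choose j : ZMod p) else 0))
          = ((-1 : ZMod p)^t.card) * ((D - t.card).choose m : ZMod p) := by
        rw [hcast, Finset.mul_sum]
        refine Finset.sum_congr rfl fun j _ => ?_
        rw [if_pos hz]
        ring
      rw [hsum']
      by_cases hte : t = ∅
      · subst hte
        simp
      · rw [if_neg hte]
        have hk' := (hzs t hz hte).1
        have : (D - t.card).choose m = 0 := Nat.choose_eq_zero_of_lt (by omega)
        rw [this]
        simp
    · have hte : t ≠ ∅ := by
        intro h0
        subst h0
        exact hz (by simp)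
      rw [if_neg hte]
      apply Finset.sum_eq_zero
      intro j _
      rw [if_neg hz, mul_zero]
  rw [Finset.sum_congr rfl h8] at h7
  rw [Finset.sum_ite_eq' (Finset.univ : Finset (Fin N)).powerset ∅
    (fun _ => ((D.choose m : ZMod p)))] at h7
  rw [if_pos (Finset.mem_powerset.mpr (Finset.empty_subset _))] at h7
  have hdvd : p ∣ D.choose m := (ZMod.natCast_eq_zero_iff _ _).mp h7
  have hmsym : D.choose m = D.choose (k - 1) := by
    have h1 : m = D - (k - 1) := by omega
    rw [h1]
    exact Nat.choose_symm (by omega)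
  rw [hmsym] at hdvd
  exact hbin hdvd
end

section
/- Let p be a prime, k a positive integer with 2k ≥ D(G) + 2, G a finite abelian p-group, and T a zero-sum sequence over G of length |T| ≥ 2k. Suppose that for some i ∈ [1, 2k - D(G)], the quantity aᵢ = C(|T| - k, k - i) + (-1)^i · C(|T| - k + i - 1, k - 1) is not divisible by p. Then T has a nonempty zero-sum subsequence of length at most k - 1. -/
open Polynomial

namespace Stmt17

variable {A : Type*} [CommRing A]

/-- Fibonacci-like polynomials: G₀ = 0, G₁ = 1, G_{n+2} = G_{n+1} - X·G_n. -/
noncomputable def fibP (A : Type*) [CommRing A] : ℕ → Polynomial A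
  | 0 => 0
  | 1 => 1
  | (n+2) => fibP A (n+1) - Polynomial.X * fibP A n

lemma fibP_comp (n : ℕ) :
    (fibP A n).comp (X - X^2) * (1 - 2*X) = (1-X)^n - X^n := by
  induction n using Nat.strong_induction_on with
  | _ n ih =>
    match n with
    | 0 => simp [fibP]
    | 1 => simp [fibP]; ring
    | (m+2) =>
      have h1 := ih (m+1) (by omega)
      have h0 := ih m (by omega)
      rw [fibP, sub_comp, mul_comp, X_comp, sub_mul, mul_assoc, h1, h0]
      ring

lemma fibP_natDegree (n : ℕ) : 2 * (fibP A n).natDegree ≤ n - 1 := by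
  induction n using Nat.strong_induction_on with
  | _ n ih =>
    match n with
    | 0 => simp [fibP]
    | 1 => simp [fibP]
    | 2 => simp [fibP]
    | (m+3) =>
      have h1 := ih (m+1+1) (by omega)
      have h0 := ih (m+1) (by omega)
      rw [fibP]
      have hd := natDegree_sub_le (fibP A (m+1+1)) (X * fibP A (m+1))
      have hm : (X * fibP A (m+1)).natDegree ≤ 1 + (fibP A (m+1)).natDegree :=
        le_trans natDegree_mul_le (Nat.add_le_add_right natDegree_X_le _)
      rcases le_max_iff.mp hd with h | h
      · omega
      · omega

lemma coeff_one_sub_pow (m j : ℕ) :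
    ((1 - X : Polynomial A)^m).coeff j = (-1)^j * (m.choose j : A) := by
  induction m generalizing j with
  | zero =>
    cases j with
    | zero => simp
    | succ j => simp [Polynomial.coeff_one, Nat.choose_eq_zero_of_lt]
  | succ m ih =>
    have hexp : (1 - X : Polynomial A)^(m+1) = (1-X)^m - X * (1-X)^m := by ring
    rw [hexp]
    cases j with
    | zero =>
      simp only [coeff_sub, mul_coeff_zero, coeff_X_zero, zero_mul, sub_zero, ih]
      simp
    | succ j =>
      rw [coeff_sub, coeff_X_mul, ih, ih, Nat.choose_succ_succ]
      push_cast
      ring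

/-- Truncated expansion of (1-X)^{-k}. -/
noncomputable def Wk (A : Type*) [CommRing A] (k : ℕ) : Polynomial A :=
  ∑ t ∈ Finset.range k, Polynomial.C ((k-1+t).choose (k-1) : A) * Polynomial.X ^ t

lemma coeff_Wk (k t : ℕ) (ht : t < k) :
    (Wk A k).coeff t = ((k-1+t).choose (k-1) : A) := by
  rw [Wk, finset_sum_coeff]
  rw [Finset.sum_eq_single t]
  · simp
  · intro b _ hbt
    simp [coeff_X_pow, Ne.symm hbt]
  · intro h
    exact absurd (Finset.mem_range.mpr ht) h

lemma L1 {k : ℕ} : ∀ b c t : ℕ, b + c + 1 = k → t + 1 ≤ k →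
    (((1-X)^b * Wk A k).coeff t) = ((c+t).choose c : A) := by
  intro b
  induction b with
  | zero =>
    intro c t hbc ht
    have hc : c = k - 1 := by omega
    rw [pow_zero, one_mul, coeff_Wk _ _ (by omega), hc]
  | succ b ih =>
    intro c t hbc ht
    have hexp : ((1-X : Polynomial A))^(b+1) * Wk A k
        = (1-X)^b * Wk A k - X * ((1-X)^b * Wk A k) := by ring
    rw [hexp, coeff_sub]
    cases t with
    | zero =>
      have hX : (X * ((1-X:Polynomial A)^b * Wk A k)).coeff 0 = 0 := by
        simp [mul_coeff_zero]
      rw [hX, sub_zero, ih (c+1) 0 (by omega) (by omega)]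
      simp
    | succ t =>
      rw [coeff_X_mul, ih (c+1) (t+1) (by omega) (by omega), ih (c+1) t (by omega) (by omega)]
      have hnat : (c+1+(t+1)).choose (c+1) = (c+1+t).choose c + (c+1+t).choose (c+1) := by
        rw [show c+1+(t+1) = (c+1+t)+1 by omega]
        exact Nat.choose_succ_succ (c+1+t) c
      rw [hnat, show c+(t+1) = c+1+t by omega]
      push_cast
      ring

lemma L2 {k : ℕ} (hk : 1 ≤ k) (t : ℕ) (ht : t + 1 ≤ k) :
    (((1-X)^k * Wk A k).coeff t) = if t = 0 then 1 else 0 := by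
  obtain ⟨K, rfl⟩ : ∃ K, k = K + 1 := ⟨k-1, by omega⟩
  have hexp : ((1-X : Polynomial A))^(K+1) * Wk A (K+1)
      = (1-X)^K * Wk A (K+1) - X * ((1-X)^K * Wk A (K+1)) := by ring
  rw [hexp, coeff_sub]
  cases t with
  | zero =>
    have hX : (X * ((1-X:Polynomial A)^K * Wk A (K+1))).coeff 0 = 0 := by
      simp [mul_coeff_zero]
    rw [hX, sub_zero, L1 K 0 0 (by omega) (by omega)]
    simp
  | succ t =>
    rw [coeff_X_mul, L1 K 0 (t+1) (by omega) (by omega), L1 K 0 t (by omega) (by omega)]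
    simp

/-- Multiplying by (1-X)^k · Wk doesn't change low coefficients. -/
lemma Lmul {k : ℕ} (hk : 1 ≤ k) (F : Polynomial A) (m : ℕ) (hm : m + 1 ≤ k) :
    ((F * ((1-X)^k * Wk A k)).coeff m) = F.coeff m := by
  rw [coeff_mul]
  rw [Finset.sum_eq_single (m, 0)]
  · rw [L2 hk 0 (by omega)]; simp
  · rintro ⟨x, y⟩ hxy hne
    have hsum : x + y = m := Finset.HasAntidiagonal.mem_antidiagonal.mp hxy
    have hy : y ≠ 0 := by
      rintro rfl
      exact hne (by simp [← hsum])
    rw [L2 hk y (by omega), if_neg hy, mul_zero]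
  · intro h
    exact absurd (Finset.HasAntidiagonal.mem_antidiagonal.mpr (by simp)) h

lemma coeff_X_pow_mul_lt (F : Polynomial A) (c m : ℕ) (hm : m < c) :
    ((X^c * F).coeff m) = 0 := by
  rw [coeff_mul]
  apply Finset.sum_eq_zero
  rintro ⟨x, y⟩ hxy
  have hsum : x + y = m := Finset.HasAntidiagonal.mem_antidiagonal.mp hxy
  rw [coeff_X_pow, if_neg (by omega), zero_mul]

/-- The kill lemma: Λ(w^j (1-2X)) = 0 for j ≤ k-2. -/
lemma L3 {k : ℕ} (j : ℕ) (hj : j + 2 ≤ k) :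
    ((((X - X^2)^j * (1 - 2*X)) * Wk A k).coeff (k-1)) = 0 := by
  obtain ⟨m, hm⟩ : ∃ m, k = j + m + 2 := ⟨k - j - 2, by omega⟩
  subst hm
  have hw : (X - X^2 : Polynomial A) = X * (1-X) := by ring
  have hexp : (((X - X^2 : Polynomial A))^j * (1 - 2*X)) * Wk A (j+m+2)
      = X^j * ((1-X)^(j+1) * Wk A (j+m+2)) - X^(j+1) * ((1-X)^j * Wk A (j+m+2)) := by
    rw [hw, mul_pow]; ring
  rw [hexp, coeff_sub]
  have h1 : j + m + 2 - 1 = (m+1) + j := by omega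
  have h2 : j + m + 2 - 1 = m + (j+1) := by omega
  rw [h1, coeff_X_pow_mul, L1 (j+1) m (m+1) (by omega) (by omega)]
  rw [show (m+1) + j = m + (j+1) by omega, coeff_X_pow_mul,
    L1 j (m+1) m (by omega) (by omega)]
  have hnat : (2*m+1).choose m = (2*m+1).choose (m+1) := by
    have := Nat.choose_symm (n := 2*m+1) (k := m+1) (by omega)
    rw [show 2*m+1 - (m+1) = m by omega] at this
    exact this
  rw [show m + (m+1) = 2*m+1 by omega, show m+1+m = 2*m+1 by omega, hnat, sub_self]

lemma coeff_comp_one_sub (Q : Polynomial A) (j : ℕ) :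
    (Q.comp (1 - X)).coeff j
      = ∑ m ∈ Finset.range (Q.natDegree + 1), Q.coeff m * ((-1)^j * (m.choose j : A)) := by
  rw [comp_eq_sum_left, Polynomial.sum_over_range' _ (by simp) (Q.natDegree+1) (by omega),
    finset_sum_coeff]
  apply Finset.sum_congr rfl
  intro m _
  rw [coeff_C_mul, coeff_one_sub_pow]

lemma coeff_mul_eq_of_low {k : ℕ} {F G : Polynomial A}
    (h : ∀ m, m < k → F.coeff m = G.coeff m) (Z : Polynomial A) (m : ℕ) (hm : m < k) :
    (F * Z).coeff m = (G * Z).coeff m := by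
  rw [coeff_mul, coeff_mul]
  apply Finset.sum_congr rfl
  rintro ⟨x, y⟩ hxy
  have hs : x + y = m := Finset.HasAntidiagonal.mem_antidiagonal.mp hxy
  rw [h x (by omega)]

variable {p : ℕ} [Fact p.Prime]

lemma natDegree_one_sub_X : (1 - X : Polynomial (ZMod p)).natDegree = 1 := by
  have : (1 - X : Polynomial (ZMod p)) = -(X - Polynomial.C 1) := by
    rw [map_one]; ring
  rw [this, natDegree_neg, natDegree_X_sub_C]

lemma leadingCoeff_one_sub_X : (1 - X : Polynomial (ZMod p)).leadingCoeff = -1 := by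
  have : (1 - X : Polynomial (ZMod p)) = -(X - Polynomial.C 1) := by
    rw [map_one]; ring
  rw [this, leadingCoeff_neg, (monic_X_sub_C (1 : ZMod p)).leadingCoeff]

lemma natDegree_X_sub_X_sq : (X - X^2 : Polynomial (ZMod p)).natDegree = 2 := by
  have h : (X - X^2 : Polynomial (ZMod p)) = X * (1 - X) := by ring
  rw [h, natDegree_mul X_ne_zero, natDegree_X, natDegree_one_sub_X]
  · intro hc
    have := congrArg Polynomial.natDegree hc
    rw [natDegree_one_sub_X, natDegree_zero] at this
    exact one_ne_zero this

lemma leadingCoeff_X_sub_X_sq : (X - X^2 : Polynomial (ZMod p)).leadingCoeff = -1 := by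
  have h : (X - X^2 : Polynomial (ZMod p)) = X * (1 - X) := by ring
  rw [h, leadingCoeff_mul, leadingCoeff_X, leadingCoeff_one_sub_X, one_mul]

lemma sym_decomp (hp : p.Prime) : ∀ (n : ℕ) (Q : Polynomial (ZMod p)), Q.natDegree ≤ n →
    Q.comp (1 - X) = Q →
    ∃ P : Polynomial (ZMod p), Q = P.comp (X - X^2) ∧ 2 * P.natDegree ≤ Q.natDegree := by
  intro n
  induction n with
  | zero =>
    intro Q hdeg hsym
    exact ⟨Polynomial.C (Q.coeff 0),
      by rw [C_comp]; exact eq_C_of_natDegree_le_zero hdeg, by simp⟩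
  | succ n ih =>
    intro Q hdeg hsym
    by_cases h0 : Q.natDegree = 0
    · exact ⟨Polynomial.C (Q.coeff 0),
        by rw [C_comp]; exact eq_C_of_natDegree_le_zero (le_of_eq h0), by simp [h0]⟩
    have hd1 : 1 ≤ Q.natDegree := by omega
    set d := Q.natDegree with hd
    have hQne : Q ≠ 0 := fun h => h0 (by rw [hd, h, natDegree_zero])
    have hlc0 : Q.leadingCoeff ≠ 0 := leadingCoeff_ne_zero.mpr hQne
    -- leading coefficient relation
    have hlead : Q.leadingCoeff = Q.leadingCoeff * (-1)^d := by
      have hcomp := leadingCoeff_comp (p := Q) (q := 1 - X)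
        (by rw [natDegree_one_sub_X]; omega)
      rw [hsym, leadingCoeff_one_sub_X] at hcomp
      simpa using hcomp
    have hpow : ((-1 : ZMod p))^d = 1 :=
      (mul_left_cancel₀ hlc0 (by rw [← hlead, mul_one])).symm
    -- second coefficient relation
    have hsub : Q.coeff (d-1) = (-1)^(d-1) * (Q.coeff (d-1) + (d : ZMod p) * Q.coeff d) := by
      have hc := coeff_comp_one_sub Q (d-1)
      rw [hsym] at hc
      have hsum : ∑ m ∈ Finset.range (Q.natDegree + 1),
          Q.coeff m * ((-1)^(d-1) * (m.choose (d-1) : ZMod p))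
          = (-1)^(d-1) * (Q.coeff (d-1) + (d : ZMod p) * Q.coeff d) := by
        rw [← hd, show d + 1 = (d - 1) + 1 + 1 by omega,
          Finset.sum_range_succ, Finset.sum_range_succ]
        have hzero : ∑ m ∈ Finset.range (d-1),
            Q.coeff m * ((-1)^(d-1) * (m.choose (d-1) : ZMod p)) = 0 := by
          apply Finset.sum_eq_zero
          intro m hm
          rw [Nat.choose_eq_zero_of_lt (Finset.mem_range.mp hm)]
          simp
        have hds : d - 1 + 1 = d := by omega
        have hchoose : d.choose (d-1) = d := by
          have h1 := Nat.choose_symm (n := d) (k := d - 1) (by omega)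
          rw [show d - (d-1) = 1 by omega, Nat.choose_one_right] at h1
          exact h1.symm
        rw [hzero, zero_add, Nat.choose_self, hds, hchoose]
        push_cast
        ring
      exact hc.trans hsum
    -- d is even
    have heven : d % 2 = 0 := by
      by_contra hodd
      have hoddd : Odd d := Nat.odd_iff.mpr (by omega)
      have h2 : ((-1 : ZMod p)) = 1 := by rw [← hoddd.neg_one_pow, hpow]
      have hp2 : ((2 : ℕ) : ZMod p) = 0 := by
        push_cast
        linear_combination -h2
      have hdvd2 : p ∣ 2 := (ZMod.natCast_eq_zero_iff 2 p).mp hp2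
      have hpeq2 : p = 2 := (Nat.prime_dvd_prime_iff_eq hp Nat.prime_two).mp hdvd2
      -- from hsub with d-1 even
      have hevenm1 : Even (d - 1) := by
        rcases Nat.even_or_odd (d-1) with h | h
        · exact h
        · exfalso
          have := Nat.odd_iff.mp h
          omega
      have hsgn : ((-1 : ZMod p))^(d-1) = 1 := hevenm1.neg_one_pow
      rw [hsgn, one_mul] at hsub
      have hdq : (d : ZMod p) * Q.coeff d = 0 := by linear_combination -hsub
      have hqd : Q.coeff d ≠ 0 := by
        rw [hd]
        exact fun h => hQne (leadingCoeff_eq_zero.mp (by rwa [leadingCoeff]))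
      have hdz : (d : ZMod p) = 0 := by
        rcases mul_eq_zero.mp hdq with h | h
        · exact h
        · exact absurd h hqd
      have : p ∣ d := (ZMod.natCast_eq_zero_iff d p).mp hdz
      rw [hpeq2] at this
      omega
    obtain ⟨e, he⟩ : ∃ e, d = 2 * e := ⟨d/2, by omega⟩
    have he1 : 1 ≤ e := by omega
    set cQ := Q.coeff d with hcQ
    set Q' := Q - Polynomial.C (cQ * (-1)^e) * (X - X^2)^e with hQ'
    have hwdeg : ((X - X^2 : Polynomial (ZMod p))^e).natDegree = 2*e := by
      rw [natDegree_pow, natDegree_X_sub_X_sq]; ring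
    have hwlc : ((X - X^2 : Polynomial (ZMod p))^e).coeff (2*e) = (-1)^e := by
      have h1 : ((X - X^2 : Polynomial (ZMod p))^e).leadingCoeff = (-1)^e := by
        rw [leadingCoeff_pow, leadingCoeff_X_sub_X_sq]
      rw [← h1, leadingCoeff, hwdeg]
    have hneg1 : ((-1 : ZMod p))^e * (-1)^e = 1 := by
      rw [← pow_add]
      exact Even.neg_one_pow ⟨e, rfl⟩
    have hQ'd : Q'.coeff d = 0 := by
      rw [hQ', coeff_sub, coeff_C_mul, he, hwlc, mul_assoc, hneg1, mul_one, hcQ, he, sub_self]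
    have hQ'le : Q'.natDegree ≤ d := by
      apply le_trans (natDegree_sub_le _ _)
      apply max_le (le_of_eq hd.symm)
      apply le_trans (natDegree_C_mul_le _ _)
      rw [hwdeg]; omega
    have hQ'deg : Q'.natDegree ≤ d - 1 := by
      rw [natDegree_le_iff_coeff_eq_zero]
      intro N hN
      rcases Nat.lt_or_ge d N with h | h
      · exact coeff_eq_zero_of_natDegree_lt (lt_of_le_of_lt hQ'le h)
      · have : N = d := by omega
        rw [this]; exact hQ'd
    have hQ'sym : Q'.comp (1 - X) = Q' := by
      have hww : ((1 - X) - (1 - X)^2 : Polynomial (ZMod p)) = X - X^2 := by ring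
      rw [hQ', sub_comp, mul_comp, C_comp, pow_comp, sub_comp, X_comp, pow_comp, X_comp,
        hsym, hww]
    obtain ⟨P', hP'c, hP'd⟩ := ih Q' (by omega) hQ'sym
    refine ⟨P' + Polynomial.C (cQ * (-1)^e) * X^e, ?_, ?_⟩
    · rw [add_comp, mul_comp, C_comp, pow_comp, X_comp, ← hP'c, hQ']; ring
    · have h1 : (P' + Polynomial.C (cQ * (-1)^e) * X^e).natDegree ≤ max P'.natDegree e := by
        apply le_trans (natDegree_add_le _ _)
        apply max_le (le_max_left _ _)
        apply le_trans (natDegree_C_mul_le _ _)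
        rw [natDegree_X_pow]
        exact le_max_right _ _
      have h2 := le_max_iff.mp h1
      rcases h2 with h | h
      · omega
      · omega

lemma LH {k : ℕ} (hk : 2 ≤ k) (H : Polynomial (ZMod p)) (hH : H.natDegree ≤ k - 2) :
    ((H.comp (X - X^2) * (1 - 2*X)) * Wk (ZMod p) k).coeff (k-1) = 0 := by
  rw [comp_eq_sum_left, Polynomial.sum_over_range' _ (by simp) (H.natDegree+1) (by omega),
    Finset.sum_mul, Finset.sum_mul, finset_sum_coeff]
  apply Finset.sum_eq_zero
  intro j hj
  have hj2 : j + 2 ≤ k := by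
    have := Finset.mem_range.mp hj; omega
  have harr : (Polynomial.C (H.coeff j) * (X - X^2)^j) * (1 - 2*X) * Wk (ZMod p) k
      = Polynomial.C (H.coeff j) * (((X - X^2)^j * (1 - 2*X)) * Wk (ZMod p) k) := by ring
  rw [harr, coeff_C_mul, L3 j hj2, mul_zero]

lemma part3 (hp : p.Prime) (k D l i : ℕ) (hk2 : 2 ≤ k) (hDk : k ≤ D)
    (hi1 : 1 ≤ i) (hiD : D + i ≤ 2*k) (hl : 2*k ≤ l)
    (Q : Polynomial (ZMod p))
    (hQD : ∀ m, D ≤ m → Q.coeff m = 0)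
    (hQsym : Q.comp (1 - X) = Q)
    (hQlow : ∀ m, m < k → Q.coeff m = ((1 - X : Polynomial (ZMod p))^l).coeff m) :
    ((l - k).choose (k - i) : ZMod p) + (-1)^i * ((l - k + i - 1).choose (k-1) : ZMod p) = 0 := by
  rcases Nat.lt_or_ge i 2 with hi2 | hi2
  · have hieq : i = 1 := by omega
    subst hieq
    rw [show l - k + 1 - 1 = l - k by omega, show k - 1 = k - 1 by rfl]
    ring
  have hik : i ≤ k := by omega
  have hD1 : 1 ≤ D := by omega
  have hdegQ : Q.natDegree ≤ D - 1 :=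
    natDegree_le_iff_coeff_eq_zero.mpr (fun N hN => hQD N (by omega))
  obtain ⟨P, hPQ, hPdeg⟩ := sym_decomp hp (D-1) Q hdegQ hQsym
  set H := P * fibP (ZMod p) (i-1) with hH
  have hHdeg : H.natDegree ≤ k - 2 := by
    have h1 : H.natDegree ≤ P.natDegree + (fibP (ZMod p) (i-1)).natDegree := by
      rw [hH]; exact natDegree_mul_le
    have h2 := fibP_natDegree (A := ZMod p) (i-1)
    omega
  have hzero := LH hk2 H hHdeg
  -- rewrite into Q * ZZ
  set ZZ := ((fibP (ZMod p) (i-1)).comp (X - X^2) * (1 - 2*X)) * Wk (ZMod p) k with hZZ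
  have hrw : (H.comp (X - X^2) * (1 - 2*X)) * Wk (ZMod p) k = Q * ZZ := by
    rw [hH, mul_comp, ← hPQ, hZZ]; ring
  rw [hrw] at hzero
  have hlow := coeff_mul_eq_of_low (k := k) hQlow ZZ (k-1) (by omega)
  rw [hlow] at hzero
  -- now compute ((1-X)^l * ZZ) coefficient
  have hfib := fibP_comp (A := ZMod p) (i-1)
  have hsplit : (1 - X : Polynomial (ZMod p))^l * ZZ
      = (1-X)^(l-k+i-1) * ((1-X)^k * Wk (ZMod p) k)
        - X^(i-1) * ((1-X)^(l-k) * ((1-X)^k * Wk (ZMod p) k)) := by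
    rw [hZZ, ← mul_assoc, mul_assoc ((1-X : Polynomial (ZMod p))^l), hfib]
    rw [show (1 - X : Polynomial (ZMod p))^(l-k+i-1) * ((1-X)^k * Wk (ZMod p) k)
        = (1-X)^((l-k+i-1)+k) * Wk (ZMod p) k by rw [pow_add]; ring]
    rw [show (l-k+i-1)+k = l + (i-1) by omega]
    rw [show (1 - X : Polynomial (ZMod p))^(l-k) * ((1-X)^k * Wk (ZMod p) k)
        = (1-X)^((l-k)+k) * Wk (ZMod p) k by rw [pow_add]; ring]
    rw [show (l-k)+k = l by omega, pow_add]
    ring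
  rw [hsplit, coeff_sub] at hzero
  have hc1 : ((1 - X : Polynomial (ZMod p))^(l-k+i-1)
      * ((1-X)^k * Wk (ZMod p) k)).coeff (k-1)
      = (-1)^(k-1) * ((l-k+i-1).choose (k-1) : ZMod p) := by
    rw [Lmul (by omega) _ _ (by omega), coeff_one_sub_pow]
  have hc2 : (X^(i-1) * ((1 - X : Polynomial (ZMod p))^(l-k)
      * ((1-X)^k * Wk (ZMod p) k))).coeff (k-1)
      = (-1)^(k-i) * ((l-k).choose (k-i) : ZMod p) := by
    rw [show k - 1 = (k-i) + (i-1) by omega, coeff_X_pow_mul,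
      Lmul (by omega) _ _ (by omega), coeff_one_sub_pow]
  rw [hc1, hc2] at hzero
  -- final sign juggling
  have hfin : ((-1 : ZMod p))^(k-1+i)
      * ((-1)^(k-1) * ((l-k+i-1).choose (k-1) : ZMod p)
        - (-1)^(k-i) * ((l-k).choose (k-i) : ZMod p))
      = ((l - k).choose (k - i) : ZMod p)
        + (-1)^i * ((l - k + i - 1).choose (k-1) : ZMod p) := by
    rw [mul_sub, ← mul_assoc, ← mul_assoc, ← pow_add, ← pow_add,
      show (k-1+i)+(k-1) = 2*(k-1) + i by omega,
      show (k-1+i)+(k-i) = 2*(k-1) + 1 by omega,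
      pow_add, pow_add, pow_mul, neg_one_sq, one_pow, one_mul, one_mul, pow_one]
    ring
  rw [← hfin, hzero, mul_zero]

section GroupRing

open DirectSum

lemma AMA_charP (G : Type*) [AddCommGroup G] (p : ℕ) [Fact p.Prime] :
    CharP (AddMonoidAlgebra (ZMod p) G) p := by
  have hinj : Function.Injective
      (⇑(AddMonoidAlgebra.singleZeroRingHom (R := ZMod p) (M := G))) := by
    intro a b h
    have := congrArg (fun f => f.coeff (0:G)) h
    simpa [AddMonoidAlgebra.singleZeroRingHom] using this
  exact charP_of_injective_ringHom hinj p

lemma prod_sub_one_eq_zero {p : ℕ} (hp : p.Prime) {G : Type*} [AddCommGroup G] [Finite G]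
    (hpG : ∀ g : G, ∃ n : ℕ, p ^ n • g = 0) {D : ℕ}
    (hDmem : ∀ S : Multiset G, D ≤ Multiset.card S → ∃ W ≤ S, W ≠ 0 ∧ W.sum = 0)
    {α : Type*} (s : Finset α) (f : α → G) (hcard : D ≤ s.card) :
    (∏ i ∈ s, (AddMonoidAlgebra.single (f i) (1 : ZMod p) - 1)) = 0 := by
  classical
  haveI hfp : Fact p.Prime := ⟨hp⟩
  haveI : CharP (AddMonoidAlgebra (ZMod p) G) p := AMA_charP G p
  obtain ⟨ι, hι, o, ho1, ⟨eqv⟩⟩ := AddCommGroup.equiv_directSum_zmod_of_finite' G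
  haveI := hι
  set R := AddMonoidAlgebra (ZMod p) G with hR
  set u : G → R := fun g => AddMonoidAlgebra.single g 1 - 1 with hu
  haveI : ∀ i, NeZero (o i) := fun i => ⟨by have := ho1 i; omega⟩
  set δ : ι → (⨁ i, ZMod (o i)) := fun i => DirectSum.of (fun i => ZMod (o i)) i 1 with hδ
  set b : ι → G := fun i => eqv.symm (δ i) with hb
  have horder : ∀ i, addOrderOf (b i) = o i := by
    intro i
    have h1 : addOrderOf (eqv.symm (δ i)) = addOrderOf (δ i) := by
      have := addOrderOf_injective eqv.symm.toAddMonoidHom eqv.symm.injective (δ i)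
      simpa using this
    have h2 : addOrderOf (δ i) = addOrderOf (1 : ZMod (o i)) := by
      rw [hδ]
      simp only
      exact addOrderOf_injective (DirectSum.of (fun i => ZMod (o i)) i)
        (DirectSum.of_injective i) 1
    rw [hb]
    simp only
    rw [h1, h2, ZMod.addOrderOf_one]
  have hbo : ∀ i, (o i) • b i = 0 := fun i => by
    rw [← horder i]; exact addOrderOf_nsmul_eq_zero _
  have hopow : ∀ i, ∃ fi : ℕ, o i = p ^ fi := by
    intro i
    obtain ⟨n, hn⟩ := hpG (b i)
    have hdvd : o i ∣ p ^ n := by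
      rw [← horder i]; exact addOrderOf_dvd_of_nsmul_eq_zero hn
    obtain ⟨fi, _, hfi⟩ := (Nat.dvd_prime_pow hp).mp hdvd
    exact ⟨fi, hfi⟩
  have hu0 : u (0 : G) = 0 := by
    simp only [hu]
    rw [← AddMonoidAlgebra.one_def, sub_self]
  have huadd : ∀ x y : G, u (x + y) = u x + u y + u x * u y := by
    intro x y
    have hmul : AddMonoidAlgebra.single x (1:ZMod p) * AddMonoidAlgebra.single y 1
        = AddMonoidAlgebra.single (x+y) (1 : ZMod p) := by
      rw [AddMonoidAlgebra.single_mul_single, one_mul]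
    simp only [hu]
    rw [← hmul]; ring
  have hup : ∀ i, (u (b i)) ^ (o i) = 0 := by
    intro i
    obtain ⟨fi, hfi⟩ := hopow i
    simp only [hu]
    rw [hfi, sub_pow_char_pow, one_pow, AddMonoidAlgebra.single_pow, one_pow, ← hfi, hbo i,
      ← AddMonoidAlgebra.one_def, sub_self]
  set I : Ideal R := Ideal.span (Set.range fun i => u (b i)) with hI
  have humem : ∀ g : G, u g ∈ I := by
    have hsm : ∀ (m : ℕ) (i : ι), u (m • b i) ∈ I := by
      intro m i
      induction m with
      | zero => rw [zero_smul, hu0]; exact Ideal.zero_mem I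
      | succ m ihm =>
        have hstep : (m+1) • b i = m • b i + b i := by rw [add_smul, one_smul]
        rw [hstep, huadd]
        have hbmem : u (b i) ∈ I := Ideal.subset_span ⟨i, rfl⟩
        exact Ideal.add_mem _ (Ideal.add_mem _ ihm hbmem) (Ideal.mul_mem_left _ _ hbmem)
    intro g
    have hg : g = eqv.symm (eqv g) := (eqv.symm_apply_apply g).symm
    rw [hg]
    generalize (eqv g) = v
    induction v using DirectSum.induction_on with
    | zero => rw [map_zero, hu0]; exact Ideal.zero_mem I
    | of i x =>
      have hx : ((x.val : ℕ) : ZMod (o i)) = x := by rw [ZMod.natCast_val, ZMod.cast_id]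
      have hofx : DirectSum.of (fun i => ZMod (o i)) i x = (x.val : ℕ) • δ i := by
        rw [hδ]
        simp only
        rw [← map_nsmul, nsmul_eq_mul, mul_one, hx]
      rw [hofx, map_nsmul]
      exact hsm _ i
    | add x y hx hy =>
      rw [map_add, huadd]
      exact Ideal.add_mem _ (Ideal.add_mem _ hx hy) (Ideal.mul_mem_left _ _ hy)
  set N : ℕ := 1 + ∑ i, (o i - 1) with hN
  have hprodN : ∀ c : Fin N → ι, (∏ j, u (b (c j))) = 0 := by
    intro c
    have hcount : ∑ i, (Finset.univ.filter (fun j => c j = i)).card = N := by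
      rw [← Finset.card_eq_sum_card_fiberwise (fun x _ => Finset.mem_univ (c x)),
        Finset.card_fin]
    have hex : ∃ i, o i ≤ (Finset.univ.filter (fun j => c j = i)).card := by
      by_contra hno
      push_neg at hno
      have hbound : ∀ i ∈ Finset.univ,
          (Finset.univ.filter (fun j => c j = i)).card ≤ o i - 1 := by
        intro i _
        have := hno i
        omega
      have hle := Finset.sum_le_sum hbound
      rw [hcount] at hle
      omega
    obtain ⟨i0, hi0⟩ := hex
    have hgroup : (∏ j, u (b (c j)))
        = ∏ i, (u (b i)) ^ (Finset.univ.filter (fun j => c j = i)).card := by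
      rw [← Finset.prod_fiberwise_of_maps_to (fun x _ => Finset.mem_univ (c x))
        (fun j => u (b (c j)))]
      apply Finset.prod_congr rfl
      intro i _
      rw [Finset.prod_congr rfl (fun j hj => by rw [(Finset.mem_filter.mp hj).2]),
        Finset.prod_const]
    rw [hgroup]
    apply Finset.prod_eq_zero (Finset.mem_univ i0)
    obtain ⟨mm, hmm⟩ : ∃ mm, (Finset.univ.filter (fun j => c j = i0)).card = o i0 + mm :=
      ⟨(Finset.univ.filter (fun j => c j = i0)).card - o i0, by omega⟩
    rw [hmm, pow_add, hup i0, zero_mul]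
  have hIN : I ^ N ≤ ⊥ := by
    have hle : ∀ m : ℕ,
        I ^ m ≤ Ideal.span {z : R | ∃ c : Fin m → ι, z = ∏ j, u (b (c j))} := by
      intro m
      induction m with
      | zero =>
        rw [pow_zero, Ideal.one_eq_top]
        have h1 : (1 : R) ∈ Ideal.span {z : R | ∃ c : Fin 0 → ι, z = ∏ j, u (b (c j))} :=
          Ideal.subset_span ⟨Fin.elim0, by simp⟩
        exact le_of_eq ((Ideal.eq_top_iff_one _).mpr h1).symm
      | succ m ihm =>
        rw [pow_succ]
        refine le_trans (Ideal.mul_mono ihm le_rfl) ?_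
        conv_lhs => rw [hI]
        rw [Ideal.span_mul_span, Ideal.span_le]
        rintro z hz
        simp only [Set.mem_mul] at hz
        obtain ⟨zA, ⟨c, rfl⟩, zB, ⟨i0, rfl⟩, rfl⟩ := hz
        apply Ideal.subset_span
        refine ⟨Fin.snoc c i0, ?_⟩
        rw [Fin.prod_univ_castSucc]
        simp [Fin.snoc_castSucc, Fin.snoc_last]
    refine le_trans (hle N) ?_
    rw [Ideal.span_le]
    rintro z ⟨c, rfl⟩
    rw [hprodN c]
    exact Ideal.zero_mem ⊥
  have hmemS1 : True := trivial
  have hND : N ≤ D := by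
    by_contra hcon
    push_neg at hcon
    set S1 : Multiset (⨁ i, ZMod (o i)) := ∑ i, (o i - 1) • ({δ i} : Multiset _) with hS1
    set S0 : Multiset G := S1.map (⇑eqv.symm) with hS0
    have hcard1gen : ∀ (t : Finset ι),
        Multiset.card (∑ i ∈ t, (o i - 1) • ({δ i} : Multiset _)) = ∑ i ∈ t, (o i - 1) := by
      intro t
      induction t using Finset.cons_induction with
      | empty => simp
      | cons a t ha iht =>
        rw [Finset.sum_cons, Finset.sum_cons, Multiset.card_add, iht,
          Multiset.card_nsmul, Multiset.card_singleton, mul_one]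
    have hcard1 : Multiset.card S1 = ∑ i, (o i - 1) := by
      rw [hS1]; exact hcard1gen Finset.univ
    have hcard0 : Multiset.card S0 = ∑ i, (o i - 1) := by
      rw [hS0, Multiset.card_map, hcard1]
    obtain ⟨W, hWle, hWne, hWsum⟩ := hDmem S0 (by omega)
    set W1 : Multiset (⨁ i, ZMod (o i)) := W.map (⇑eqv) with hW1
    have hW1le : W1 ≤ S1 := by
      have hmle := Multiset.map_le_map (f := ⇑eqv) hWle
      rw [hS0, Multiset.map_map] at hmle
      simpa using hmle
    have hW1sum : W1.sum = 0 := by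
      have hms := eqv.toAddMonoidHom.map_multiset_sum W
      simp only [AddEquiv.coe_toAddMonoidHom] at hms
      rw [hW1, ← hms, hWsum, map_zero]
    have hW1ne : W1 ≠ 0 := by
      rw [hW1, Ne, Multiset.map_eq_zero]
      exact hWne
    have hmemδ : ∀ z ∈ S1, ∃ j, z = δ j := by
      intro z hz
      rw [hS1] at hz
      obtain ⟨j, _, hzj⟩ := Multiset.mem_sum.mp hz
      refine ⟨j, ?_⟩
      have := (Multiset.mem_nsmul.mp hzj).2
      rwa [Multiset.mem_singleton] at this
    obtain ⟨x, hx⟩ := Multiset.exists_mem_of_ne_zero hW1ne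
    have hxS1 : x ∈ S1 := Multiset.mem_of_le hW1le hx
    obtain ⟨i0, rfl⟩ := hmemδ x hxS1
    have hone : (1 : ZMod (o i0)) ≠ 0 := by
      intro h1
      have := (ZMod.natCast_eq_zero_iff 1 (o i0)).mp (by exact_mod_cast h1)
      have := Nat.le_of_dvd one_pos this
      have := ho1 i0
      omega
    have hδinj : ∀ j, δ j = δ i0 → j = i0 := by
      intro j hji
      by_contra hne
      have happ : (δ j) i0 = (δ i0) i0 := by rw [hji]
      rw [hδ] at happ
      simp only at happ
      rw [DirectSum.of_eq_of_ne _ _ _ (Ne.symm hne), DirectSum.of_eq_same] at happ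
      exact hone happ.symm
    set cnt := W1.count (δ i0) with hcnt
    have hcnt1 : 1 ≤ cnt := Multiset.count_pos.mpr hx
    have hcntS1 : Multiset.count (δ i0) S1 = o i0 - 1 := by
      rw [hS1, Multiset.count_sum']
      rw [Finset.sum_eq_single i0]
      · rw [Multiset.count_nsmul, Multiset.count_singleton, if_pos rfl, mul_one]
      · intro j _ hne
        rw [Multiset.count_nsmul, Multiset.count_singleton,
          if_neg (fun h => hne (hδinj j h.symm)), mul_zero]
      · intro h
        exact absurd (Finset.mem_univ i0) h
    have hcntle : cnt ≤ o i0 - 1 :=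
      le_trans (Multiset.count_le_of_le _ hW1le) (le_of_eq hcntS1)
    have hcomp : ((cnt : ℕ) : ZMod (o i0)) = 0 := by
      have hsum0 : (W1.map (fun z => z i0)).sum = 0 := by
        have h1 := (DFinsupp.evalAddMonoidHom (β := fun i => ZMod (o i)) i0).map_multiset_sum W1
        rw [hW1sum, map_zero] at h1
        exact h1.symm
      have hsplitW : W1 = Multiset.filter (fun z => z = δ i0) W1
          + Multiset.filter (fun z => ¬ z = δ i0) W1 := (Multiset.filter_add_not _ _).symm
      rw [hsplitW, Multiset.map_add, Multiset.sum_add, Multiset.filter_eq',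
        Multiset.map_replicate, Multiset.sum_replicate] at hsum0
      have hz2 : ((Multiset.filter (fun z => ¬ z = δ i0) W1).map (fun z => z i0)).sum = 0 := by
        apply Multiset.sum_eq_zero
        intro y hy
        obtain ⟨z, hz, rfl⟩ := Multiset.mem_map.mp hy
        have hzW1 : z ∈ W1 := Multiset.mem_of_mem_filter hz
        have hzne : z ≠ δ i0 := by
          have := Multiset.mem_filter.mp hz
          exact this.2
        obtain ⟨j, rfl⟩ := hmemδ z (Multiset.mem_of_le hW1le hzW1)
        have hjne : j ≠ i0 := fun h => hzne (by rw [h])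
        rw [hδ]
        simp only
        exact DirectSum.of_eq_of_ne _ _ _ (Ne.symm hjne)
      rw [hz2, add_zero] at hsum0
      have hval : (δ i0) i0 = 1 := by
        rw [hδ]
        simp only
        exact DirectSum.of_eq_same _ _
      rw [hval, ← hcnt] at hsum0
      rwa [nsmul_eq_mul, mul_one] at hsum0
    have hdvd : (o i0) ∣ cnt := (ZMod.natCast_eq_zero_iff _ _).mp hcomp
    have := Nat.le_of_dvd (by omega) hdvd
    omega
  have hmemI : ∀ t : Finset α, (∏ i ∈ t, u (f i)) ∈ I ^ t.card := by
    intro t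
    induction t using Finset.induction_on with
    | empty =>
      rw [Finset.prod_empty, Finset.card_empty, pow_zero, Ideal.one_eq_top]
      exact Submodule.mem_top
    | insert a t ha iht =>
      rw [Finset.prod_insert ha, Finset.card_insert_of_notMem ha, pow_succ']
      exact Ideal.mul_mem_mul (humem _) iht
  have hfinal : (∏ i ∈ s, u (f i)) ∈ (⊥ : Ideal R) :=
    hIN (Ideal.pow_le_pow_right (le_trans hND hcard) (hmemI s))
  exact Ideal.mem_bot.mp hfinal

end GroupRing

end Stmt17

open Stmt17 Polynomial in
theorem stmt_17 (p : ℕ) (hp : p.Prime) (G : Type*) [AddCommGroup G] [Fintype G]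
    (hpG : ∀ g : G, ∃ n : ℕ, p ^ n • g = 0)
    (D : ℕ)
    (hD : IsLeast {t : ℕ | ∀ S : Multiset G, t ≤ Multiset.card S →
      ∃ T ≤ S, T ≠ 0 ∧ T.sum = 0} D)
    (k : ℕ) (hk : 0 < k) (hkD : D + 2 ≤ 2 * k)
    (T : Multiset G) (hT0 : T.sum = 0) (hTcard : 2 * k ≤ Multiset.card T)
    (ha : ∃ i, 1 ≤ i ∧ i ≤ 2 * k - D ∧
      ¬ (p : ℤ) ∣ (((Multiset.card T - k).choose (k - i) : ℤ) +
        (-1) ^ i * ((Multiset.card T - k + i - 1).choose (k - 1) : ℤ))) :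
    ∃ W ≤ T, W ≠ 0 ∧ W.sum = 0 ∧ Multiset.card W ≤ k - 1 := by
  classical
  haveI hfp : Fact p.Prime := ⟨hp⟩
  have hDmem := hD.1
  simp only [Set.mem_setOf_eq] at hDmem
  have hD1 : 1 ≤ D := by
    by_contra h
    push_neg at h
    obtain ⟨W, hWle, hWne, _⟩ := hDmem 0 (by omega)
    exact hWne (Multiset.le_zero.mp hWle)
  rcases Nat.lt_or_ge D k with hDk | hDk
  · -- easy case: D ≤ k - 1
    set S : Multiset G := (↑(T.toList.take D) : Multiset G) with hS
    have hSle : S ≤ T := by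
      rw [hS]
      have h1 : (↑(T.toList.take D) : Multiset G) ≤ ↑T.toList :=
        Multiset.coe_le.mpr ((List.take_sublist D T.toList).subperm)
      rwa [Multiset.coe_toList] at h1
    have hScard : Multiset.card S = D := by
      rw [hS, Multiset.coe_card, List.length_take, Multiset.length_toList]
      omega
    obtain ⟨W, hWle, hWne, hWsum⟩ := hDmem S (le_of_eq hScard.symm)
    refine ⟨W, le_trans hWle hSle, hWne, hWsum, ?_⟩
    have := Multiset.card_le_card hWle
    omega
  -- main case : k ≤ D
  by_contra Hno
  obtain ⟨i, hi1, hiD, hnd⟩ := ha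
  have hk2 : 2 ≤ k := by omega
  have hiD' : D + i ≤ 2 * k := by omega
  set lst : List G := T.toList with hlst
  set n : ℕ := lst.length with hn
  have hnT : n = Multiset.card T := by rw [hn, hlst]; exact Multiset.length_toList T
  set v : Fin n → G := lst.get with hv
  set σ : Finset (Fin n) → G := fun t => ∑ j ∈ t, v j with hσ
  have hmapuniv : Multiset.map v (Finset.univ.val) = T := by
    have h1 : (Finset.univ.val : Multiset (Fin n)) = ↑(List.finRange n) := rfl
    rw [h1, Multiset.map_coe, hv, List.map_get_finRange, hlst, Multiset.coe_toList]
  have hWt : ∀ t : Finset (Fin n), (Multiset.map v t.val) ≤ T := by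
    intro t
    rw [← hmapuniv]
    exact Multiset.map_le_map (Finset.val_le_iff.mpr (Finset.subset_univ t))
  have hσsum : ∀ t : Finset (Fin n), σ t = (Multiset.map v t.val).sum := fun t => rfl
  have hσuniv : σ Finset.univ = 0 := by
    rw [hσsum, hmapuniv, hT0]
  have hlong : ∀ t : Finset (Fin n), σ t = 0 → t ≠ ∅ → k ≤ t.card := by
    intro t ht htne
    by_contra hlt
    push_neg at hlt
    refine Hno ⟨Multiset.map v t.val, hWt t, ?_, ?_, ?_⟩
    · rw [Ne, Multiset.map_eq_zero, Finset.val_eq_zero]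
      exact htne
    · rw [← hσsum t, ht]
    · rw [Multiset.card_map, ← Finset.card_def]
      omega
  -- the group-ring polynomial
  set Rr := AddMonoidAlgebra (ZMod p) G with hRr
  set ugen : G → Rr := fun g => AddMonoidAlgebra.single g 1 - 1 with hugen
  set P : Polynomial Rr := ∏ j : Fin n, (Polynomial.C (ugen (v j)) * Polynomial.X + 1)
    with hP
  have hPcoeff : ∀ m, D ≤ m → P.coeff m = 0 := by
    intro m hm
    rw [hP, Finset.prod_add, finset_sum_coeff]
    apply Finset.sum_eq_zero
    intro t _
    rw [Finset.prod_const_one, mul_one, Finset.prod_mul_distrib, Finset.prod_const,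
      ← map_prod, coeff_C_mul, coeff_X_pow]
    by_cases hcase : m = t.card
    · rw [if_pos hcase, mul_one, hugen]
      exact prod_sub_one_eq_zero hp hpG hDmem t (fun j => v j) (by rw [← hcase]; exact hm)
    · rw [if_neg hcase, mul_zero]
  obtain ⟨Qz, hQz⟩ : ∃ Qq : Polynomial (ZMod p),
      Qq = ∑ t ∈ (Finset.univ : Finset (Fin n)).powerset,
      (if σ t = 0 then (Polynomial.X^t.card * (1 - Polynomial.X)^(n - t.card)) else 0) :=
    ⟨_, rfl⟩
  have hPB : P = ∑ t ∈ (Finset.univ : Finset (Fin n)).powerset,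
      Polynomial.C (AddMonoidAlgebra.single (σ t) (1 : ZMod p)) *
        (Polynomial.X^t.card * (1 - Polynomial.X)^(n - t.card)) := by
    rw [hP]
    have hfac : ∀ j : Fin n, Polynomial.C (ugen (v j)) * Polynomial.X + 1
        = Polynomial.C (AddMonoidAlgebra.single (v j) (1:ZMod p)) * Polynomial.X
          + (1 - Polynomial.X) := by
      intro j
      rw [hugen]
      simp only
      rw [map_sub, map_one]
      ring
    rw [Finset.prod_congr rfl (fun j _ => hfac j), Finset.prod_add]
    apply Finset.sum_congr rfl
    intro t ht
    have hps : ∀ tt : Finset (Fin n),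
        (∏ j ∈ tt, AddMonoidAlgebra.single (v j) (1 : ZMod p))
          = AddMonoidAlgebra.single (σ tt) 1 := by
      intro tt
      induction tt using Finset.cons_induction with
      | empty =>
        rw [Finset.prod_empty, hσ]
        simp only [Finset.sum_empty]
        exact AddMonoidAlgebra.one_def
      | cons a t ha iht =>
        rw [Finset.prod_cons, iht, AddMonoidAlgebra.single_mul_single, one_mul, hσ]
        simp only [Finset.sum_cons]
    rw [Finset.prod_mul_distrib, Finset.prod_const, ← map_prod, hps t, Finset.prod_const,
      Finset.card_sdiff_of_subset (Finset.subset_univ t), Finset.card_fin]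
    ring
  have hQP : ∀ m, Qz.coeff m = AddMonoidAlgebra.coeff (P.coeff m) 0 := by
    intro m
    rw [hPB, hQz, finset_sum_coeff, finset_sum_coeff, AddMonoidAlgebra.coeff_sum, Finsupp.finset_sum_apply]
    apply Finset.sum_congr rfl
    intro t _
    rw [coeff_C_mul]
    have hmap : (Polynomial.X^t.card * (1 - Polynomial.X)^(n - t.card) : Polynomial Rr)
        = Polynomial.map (AddMonoidAlgebra.singleZeroRingHom (R := ZMod p) (M := G))
          (Polynomial.X^t.card * (1-Polynomial.X)^(n - t.card)) := by
      simp only [Polynomial.map_mul, Polynomial.map_pow, Polynomial.map_sub,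
        Polynomial.map_one, Polynomial.map_X]
    rw [hmap, Polynomial.coeff_map]
    set c0 : ZMod p :=
      (Polynomial.X^t.card * (1-Polynomial.X)^(n - t.card) : Polynomial (ZMod p)).coeff m
      with hc0
    have hsingle : (AddMonoidAlgebra.single (σ t) (1:ZMod p))
        * (AddMonoidAlgebra.singleZeroRingHom (R := ZMod p) (M := G)) c0
        = AddMonoidAlgebra.single (σ t) c0 := by
      have hrfl : (AddMonoidAlgebra.singleZeroRingHom (R := ZMod p) (M := G)) c0
          = AddMonoidAlgebra.single 0 c0 := rfl
      rw [hrfl, AddMonoidAlgebra.single_mul_single, add_zero, one_mul]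
    rw [hsingle, AddMonoidAlgebra.coeff_single]
    by_cases hσ0 : σ t = 0
    · rw [if_pos hσ0, hσ0, ← hc0]
      exact (Finsupp.single_eq_same).symm
    · rw [if_neg hσ0, Polynomial.coeff_zero]
      exact (Finsupp.single_eq_of_ne' hσ0).symm
  have hQD : ∀ m, D ≤ m → Qz.coeff m = 0 := by
    intro m hm
    rw [hQP m, hPcoeff m hm]
    rfl
  have hQlow : ∀ m, m < k → Qz.coeff m
      = ((1 - Polynomial.X : Polynomial (ZMod p))^n).coeff m := by
    intro m hm
    rw [hQz, finset_sum_coeff]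
    rw [Finset.sum_eq_single (∅ : Finset (Fin n))]
    · rw [if_pos (by rw [hσ]; simp)]
      simp
    · intro t _ htne
      by_cases hσ0 : σ t = 0
      · rw [if_pos hσ0]
        have hkc : k ≤ t.card := hlong t hσ0 htne
        exact coeff_X_pow_mul_lt _ _ _ (by omega)
      · rw [if_neg hσ0]
        exact Polynomial.coeff_zero m
    · intro h
      exact absurd (Finset.empty_mem_powerset _) h
  have hQsym : Qz.comp (1 - Polynomial.X) = Qz := by
    rw [hQz, Polynomial.sum_comp]

    have hterm : ∀ t : Finset (Fin n),
        ((if σ t = 0 then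
            (Polynomial.X^t.card * (1 - Polynomial.X)^(n - t.card) : Polynomial (ZMod p))
          else 0)).comp (1 - Polynomial.X)
        = (if σ t = 0 then
            ((1-Polynomial.X)^t.card * Polynomial.X^(n - t.card)) else 0) := by
      intro t
      split_ifs with h
      · rw [Polynomial.mul_comp, Polynomial.pow_comp, Polynomial.pow_comp,
          Polynomial.X_comp, Polynomial.sub_comp, Polynomial.one_comp, Polynomial.X_comp,
          show (1 - (1 - Polynomial.X) : Polynomial (ZMod p)) = Polynomial.X by ring]
      · exact Polynomial.zero_comp
    rw [Finset.sum_congr rfl (fun t _ => hterm t)]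
    simp only [Finset.powerset_univ]
    refine Fintype.sum_bijective (fun t : Finset (Fin n) => tᶜ)
      (Function.Involutive.bijective (fun t => compl_compl t)) _ _ (fun t => ?_)
    have hσc : σ tᶜ = 0 ↔ σ t = 0 := by
      have hcs : σ tᶜ + σ t = 0 := by
        rw [hσ]
        simp only
        rw [Finset.sum_compl_add_sum]
        exact hσuniv
      constructor
      · intro h; rw [h, zero_add] at hcs; exact hcs
      · intro h; rw [h, add_zero] at hcs; exact hcs
    have hcc : (tᶜ : Finset (Fin n)).card = n - t.card := by
      rw [Finset.card_compl, Fintype.card_fin]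
    have hcc2 : n - (tᶜ : Finset (Fin n)).card = t.card := by
      have hle : t.card ≤ n := by
        have h2 := Finset.card_le_univ t
        simpa using h2
      rw [hcc]
      omega
    by_cases h : σ t = 0
    · rw [if_pos h, if_pos (hσc.mpr h), hcc2, hcc]
      exact mul_comm _ _
    · rw [if_neg h, if_neg (fun hc => h (hσc.mp hc))]
  -- apply part3
  have hzero := part3 hp k D n i hk2 hDk hi1 hiD' (by omega)
    Qz hQD hQsym hQlow
  refine hnd ?_
  rw [← ZMod.intCast_zmod_eq_zero_iff_dvd]
  push_cast
  rw [← hnT]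
  exact hzero
end

section
/- Let p be a prime and let u, c, d, v, k, and |T| satisfy |T| - k = up + v and k = cp + d with v, d ∈ [0, p-1] and d ≥ v + 1. If C(u, c) ≡ 0 (mod p), then for every i ∈ [2, p + d - v - 1], the quantity aᵢ = C(up + v, cp + d - i) + (-1)^i · C(up + v + i - 1, cp + d - 1) is divisible by p. -/
lemma lucas_dvd {p n k : ℕ} (hp : p.Prime)
    (h : p ∣ Nat.choose (n % p) (k % p) * Nat.choose (n / p) (k / p)) :
    p ∣ Nat.choose n k := by
  haveI : Fact p.Prime := ⟨hp⟩
  have hmod := Choose.choose_modEq_choose_mod_mul_choose_div_nat (n := n) (k := k) (p := p)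
  have h0 : Nat.choose (n % p) (k % p) * Nat.choose (n / p) (k / p) ≡ 0 [MOD p] :=
    (Nat.modEq_zero_iff_dvd).mpr h
  exact (Nat.modEq_zero_iff_dvd).mp (hmod.trans h0)

lemma mod_div_of_lt {p c r : ℕ} (hp : 0 < p) (hr : r < p) :
    (c * p + r) % p = r ∧ (c * p + r) / p = c := by
  constructor
  · simp [Nat.add_mod, Nat.mul_mod_left, Nat.mod_eq_of_lt hr]
  · rw [add_comm, Nat.add_mul_div_right _ _ hp, Nat.div_eq_of_lt hr, zero_add]

theorem stmt_18 (p : ℕ) (hp : p.Prime) (u c d v : ℕ)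
    (hv : v ≤ p - 1) (hd : d ≤ p - 1) (hdv : v + 1 ≤ d)
    (hc : p ∣ u.choose c)
    (i : ℕ) (hi1 : 2 ≤ i) (hi2 : i ≤ p + d - v - 1) :
    (p : ℤ) ∣ (((u * p + v).choose (c * p + d - i) : ℤ) +
      (-1) ^ i * ((u * p + v + i - 1).choose (c * p + d - 1) : ℤ)) := by
  have hp0 : 0 < p := hp.pos
  have hp2 : 2 ≤ p := hp.two_le
  have hvp : v < p := by omega
  have hdp : d < p := by omega
  have hc1 : 1 ≤ c := by
    by_contra h
    have : c = 0 := by omega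
    subst this
    simp [Nat.choose_zero_right] at hc
    omega
  -- divisibility of the first term
  have h1 : p ∣ (u * p + v).choose (c * p + d - i) := by
    rcases le_or_gt i d with hid | hid
    · -- i ≤ d
      have hk : c * p + d - i = c * p + (d - i) := by omega
      rw [hk]
      apply lucas_dvd hp
      obtain ⟨hm1, hd1⟩ := mod_div_of_lt (c := c) (r := d - i) hp0 (by omega)
      obtain ⟨hm2, hd2⟩ := mod_div_of_lt (c := u) (r := v) hp0 hvp
      rw [hm1, hd1, hm2, hd2]
      exact Dvd.dvd.mul_left hc _
    · -- i > d
      have hk : c * p + d - i = (c - 1) * p + (p - (i - d)) := by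
        have : (c - 1) * p + p = c * p := by
          have := Nat.succ_pred_eq_of_pos hc1
          nlinarith [Nat.sub_add_cancel hc1]
        omega
      rw [hk]
      apply lucas_dvd hp
      obtain ⟨hm1, _⟩ := mod_div_of_lt (c := c - 1) (r := p - (i - d)) hp0 (by omega)
      obtain ⟨hm2, _⟩ := mod_div_of_lt (c := u) (r := v) hp0 hvp
      rw [hm1, hm2]
      have : v.choose (p - (i - d)) = 0 := Nat.choose_eq_zero_of_lt (by omega)
      simp [this]
  -- divisibility of the second term
  have h2 : p ∣ (u * p + v + i - 1).choose (c * p + d - 1) := by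
    have hk : c * p + d - 1 = c * p + (d - 1) := by omega
    rw [hk]
    rcases le_or_gt (v + i) p with hvi | hvi
    · have hn : u * p + v + i - 1 = u * p + (v + i - 1) := by omega
      rw [hn]
      apply lucas_dvd hp
      obtain ⟨hm1, hd1⟩ := mod_div_of_lt (c := u) (r := v + i - 1) hp0 (by omega)
      obtain ⟨hm2, hd2⟩ := mod_div_of_lt (c := c) (r := d - 1) hp0 (by omega)
      rw [hm1, hd1, hm2, hd2]
      exact Dvd.dvd.mul_left hc _
    · have hn : u * p + v + i - 1 = (u + 1) * p + (v + i - 1 - p) := by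
        have : (u + 1) * p = u * p + p := by ring
        omega
      rw [hn]
      apply lucas_dvd hp
      obtain ⟨hm1, _⟩ := mod_div_of_lt (c := u + 1) (r := v + i - 1 - p) hp0 (by omega)
      obtain ⟨hm2, _⟩ := mod_div_of_lt (c := c) (r := d - 1) hp0 (by omega)
      rw [hm1, hm2]
      have : (v + i - 1 - p).choose (d - 1) = 0 := Nat.choose_eq_zero_of_lt (by omega)
      simp [this]
  have h1' : (p : ℤ) ∣ ((u * p + v).choose (c * p + d - i) : ℤ) := Int.natCast_dvd_natCast.mpr h1
  have h2' : (p : ℤ) ∣ ((u * p + v + i - 1).choose (c * p + d - 1) : ℤ) :=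
    Int.natCast_dvd_natCast.mpr h2
  exact dvd_add h1' (Dvd.dvd.mul_left h2' _)
end

section
/- Let p be a prime and let u, c, d, v be nonnegative integers with v, d ∈ [0, p-1], d ≥ v + 2, d - v even (so p is odd), and C(u, c) not divisible by p. Then for i = d - v, the quantity aᵢ = C(up + v, cp + d - i) + (-1)^i · C(up + v + i - 1, cp + d - 1) ≡ 2·C(u, c) (mod p); in particular aᵢ is not divisible by p, while for every i ∈ [2, d - v - 1] the corresponding a_i is divisible by p. -/
lemma lucas_aux (p : ℕ) (hp : p.Prime) (n k a b : ℕ) (ha : a < p) (hb : b < p) :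
    ((n * p + a).choose (k * p + b) : ℤ) ≡ (n.choose k * a.choose b : ℕ) [ZMOD p] := by
  haveI : Fact p.Prime := ⟨hp⟩
  have h := @Choose.choose_modEq_choose_mod_mul_choose_div (n * p + a) (k * p + b) p _
  have h1 : (n * p + a) % p = a := by rw [mul_comm, Nat.mul_add_mod, Nat.mod_eq_of_lt ha]
  have h2 : (k * p + b) % p = b := by rw [mul_comm, Nat.mul_add_mod, Nat.mod_eq_of_lt hb]
  have h3 : (n * p + a) / p = n := by
    rw [Nat.add_comm, Nat.add_mul_div_right _ _ hp.pos, Nat.div_eq_of_lt ha, Nat.zero_add]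
  have h4 : (k * p + b) / p = k := by
    rw [Nat.add_comm, Nat.add_mul_div_right _ _ hp.pos, Nat.div_eq_of_lt hb, Nat.zero_add]
  rw [h1, h2, h3, h4] at h
  simpa [mul_comm] using h

theorem stmt_19 (p : ℕ) (hp : p.Prime) (u c d v : ℕ)
    (hv : v ≤ p - 1) (hd : d ≤ p - 1) (hdv : v + 2 ≤ d) (heven : Even (d - v))
    (hc : ¬ p ∣ u.choose c) :
    ((((u * p + v).choose (c * p + d - (d - v)) : ℤ) +
        (-1) ^ (d - v) * ((u * p + v + (d - v) - 1).choose (c * p + d - 1) : ℤ))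
      ≡ 2 * (u.choose c : ℤ) [ZMOD p]) ∧
    (¬ (p : ℤ) ∣ (((u * p + v).choose (c * p + d - (d - v)) : ℤ) +
        (-1) ^ (d - v) * ((u * p + v + (d - v) - 1).choose (c * p + d - 1) : ℤ))) ∧
    (∀ i, 2 ≤ i → i ≤ d - v - 1 →
      (p : ℤ) ∣ (((u * p + v).choose (c * p + d - i) : ℤ) +
        (-1) ^ i * ((u * p + v + i - 1).choose (c * p + d - 1) : ℤ))) := by
  have hp2 : 2 ≤ p := hp.two_le
  have hp3 : 3 ≤ p := by omega
  have e1 : c * p + d - (d - v) = c * p + v := by omega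
  have e2 : u * p + v + (d - v) - 1 = u * p + (d - 1) := by omega
  have e3 : c * p + d - 1 = c * p + (d - 1) := by omega
  have hvp : v < p := by omega
  have hdp : d - 1 < p := by omega
  have cong1 : (((u * p + v).choose (c * p + d - (d - v)) : ℤ) +
      (-1) ^ (d - v) * ((u * p + v + (d - v) - 1).choose (c * p + d - 1) : ℤ))
      ≡ 2 * (u.choose c : ℤ) [ZMOD p] := by
    rw [e1, e2, e3, heven.neg_one_pow, one_mul]
    have hA := lucas_aux p hp u c v v hvp hvp
    have hB := lucas_aux p hp u c (d - 1) (d - 1) hdp hdp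
    simp only [Nat.choose_self, Nat.mul_one, Nat.cast_mul] at hA hB
    calc ((u * p + v).choose (c * p + v) : ℤ) + ((u * p + (d-1)).choose (c * p + (d-1)) : ℤ)
        ≡ (u.choose c : ℤ) + (u.choose c : ℤ) [ZMOD p] := by
          exact Int.ModEq.add (by simpa using hA) (by simpa using hB)
      _ = 2 * (u.choose c : ℤ) := by ring
  refine ⟨cong1, ?_, ?_⟩
  · intro hdvd
    have h0 : 2 * (u.choose c : ℤ) ≡ 0 [ZMOD p] :=
      ((Int.modEq_zero_iff_dvd.mpr hdvd).symm.trans cong1).symm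
    have h1 : (p : ℤ) ∣ ((2 * u.choose c : ℕ) : ℤ) := by
      push_cast
      exact Int.modEq_zero_iff_dvd.mp h0
    have h2 : p ∣ 2 * u.choose c := Int.natCast_dvd_natCast.mp h1
    rcases (Nat.Prime.dvd_mul hp).mp h2 with h | h
    · have := Nat.le_of_dvd (by norm_num) h
      omega
    · exact hc h
  · intro i hi1 hi2
    have e4 : c * p + d - i = c * p + (d - i) := by omega
    have e5 : u * p + v + i - 1 = u * p + (v + i - 1) := by omega
    have hdi : d - i < p := by omega
    have hvi : v + i - 1 < p := by omega
    have hA := lucas_aux p hp u c v (d - i) hvp hdi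
    have hB := lucas_aux p hp u c (v + i - 1) (d - 1) hvi hdp
    rw [Nat.choose_eq_zero_of_lt (by omega : v < d - i)] at hA
    rw [Nat.choose_eq_zero_of_lt (by omega : v + i - 1 < d - 1)] at hB
    simp only [Nat.mul_zero, Nat.cast_zero] at hA hB
    have dA : (p : ℤ) ∣ ((u * p + v).choose (c * p + (d - i)) : ℤ) :=
      (Int.modEq_zero_iff_dvd).mp hA
    have dB : (p : ℤ) ∣ ((u * p + (v + i - 1)).choose (c * p + (d - 1)) : ℤ) :=
      (Int.modEq_zero_iff_dvd).mp hB
    rw [e4, e5, e3]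
    exact dvd_add dA (Dvd.dvd.mul_left dB _)
end
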